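/- arXiv:2502.12725 — 9 statements merged into one kernel-verified Lean document; each statement's English description precedes it below -/
import Mathlib

section
/- Let B be a β-set and fix an integer e ≥ 2. For each i ∈ {0,…,e−1} let Q_i := {a ∈ ℤ : ae + i ∈ B}. Then each Q_i is a β-set, and for every j ∈ {0,…,e−1} one has hub_j(B) = s(Q_j) − s(Q_{(j−1) mod e}) − δ_{j,0}, where δ_{j,0} = 1 if j = 0 and δ_{j,0} = 0 otherwise. -/
/-- A β-set is a subset of ℤ that is bounded above and whose complement is bounded below. -/
def IsBetaSet (B : Set ℤ) : Prop := BddAbove B ∧ BddBelow Bᶜ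

/-- The charge of a β-set: `|B ∩ ℤ_{≥0}| − |ℤ_{<0} ∖ B|`. -/
noncomputable def charge (B : Set ℤ) : ℤ :=
  ((B ∩ {x : ℤ | 0 ≤ x}).ncard : ℤ) - (({x : ℤ | x < 0} \ B).ncard : ℤ)

/-- `hub_j(B) = |{x ∈ B : x ≡ j (mod e), x−1 ∉ B}| − |{x ∈ B : x ≡ j−1 (mod e), x+1 ∉ B}|`. -/
noncomputable def hub (e j : ℤ) (B : Set ℤ) : ℤ :=
  (({x ∈ B | x % e = j % e ∧ x - 1 ∉ B}).ncard : ℤ) -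
    (({x ∈ B | x % e = (j - 1) % e ∧ x + 1 ∉ B}).ncard : ℤ)

noncomputable def dd (X Y : Set ℤ) : ℤ :=
  ((X \ Y).ncard : ℤ) - ((Y \ X).ncard : ℤ)

lemma finite_of_bdd {S : Set ℤ} (h1 : BddAbove S) (h2 : BddBelow S) : S.Finite := by
  obtain ⟨a, ha⟩ := h1
  obtain ⟨b, hb⟩ := h2
  exact (Set.finite_Icc b a).subset (fun x hx => ⟨hb hx, ha hx⟩)

lemma beta_diff_finite {X Y : Set ℤ} (hX : IsBetaSet X) (hY : IsBetaSet Y) :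
    (X \ Y).Finite := by
  obtain ⟨a, ha⟩ := hX.1
  obtain ⟨b, hb⟩ := hY.2
  exact finite_of_bdd ⟨a, fun x hx => ha hx.1⟩ ⟨b, fun x hx => hb hx.2⟩

lemma dd_eq_S {X Y S : Set ℤ} (hS : S.Finite) (h1 : X \ Y ⊆ S) (h2 : Y \ X ⊆ S) :
    dd X Y = ((X ∩ S).ncard : ℤ) - ((Y ∩ S).ncard : ℤ) := by
  have e1 : X \ Y = (X ∩ S) \ (Y ∩ S) := by
    ext x
    constructor
    · intro hx; exact ⟨⟨hx.1, h1 hx⟩, fun h => hx.2 h.1⟩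
    · rintro ⟨⟨hx, hs⟩, hy⟩; exact ⟨hx, fun h => hy ⟨h, hs⟩⟩
  have e2 : Y \ X = (Y ∩ S) \ (X ∩ S) := by
    ext x
    constructor
    · intro hx; exact ⟨⟨hx.1, h2 hx⟩, fun h => hx.2 h.1⟩
    · rintro ⟨⟨hx, hs⟩, hy⟩; exact ⟨hx, fun h => hy ⟨h, hs⟩⟩
  have fX : (X ∩ S).Finite := hS.inter_of_right X
  have fY : (Y ∩ S).Finite := hS.inter_of_right Y
  have hA := Set.ncard_inter_add_ncard_diff_eq_ncard (X ∩ S) (Y ∩ S) fX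
  have hB := Set.ncard_inter_add_ncard_diff_eq_ncard (Y ∩ S) (X ∩ S) fY
  have hcomm : ((X ∩ S) ∩ (Y ∩ S)).ncard = ((Y ∩ S) ∩ (X ∩ S)).ncard := by
    rw [Set.inter_comm]
  rw [dd, e1, e2]
  omega

lemma dd_cocycle {X Y Z : Set ℤ} (h1 : (X \ Y).Finite) (h2 : (Y \ X).Finite)
    (h3 : (Y \ Z).Finite) (h4 : (Z \ Y).Finite) : dd X Z = dd X Y + dd Y Z := by
  set S := (X \ Y) ∪ (Y \ X) ∪ ((Y \ Z) ∪ (Z \ Y)) with hSdef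
  have hS : S.Finite := ((h1.union h2).union (h3.union h4))
  have s1 : X \ Y ⊆ S := fun x hx => Or.inl (Or.inl hx)
  have s2 : Y \ X ⊆ S := fun x hx => Or.inl (Or.inr hx)
  have s3 : Y \ Z ⊆ S := fun x hx => Or.inr (Or.inl hx)
  have s4 : Z \ Y ⊆ S := fun x hx => Or.inr (Or.inr hx)
  have s5 : X \ Z ⊆ S := by
    intro x hx
    by_cases hy : x ∈ Y
    · exact s3 ⟨hy, hx.2⟩
    · exact s1 ⟨hx.1, hy⟩
  have s6 : Z \ X ⊆ S := by
    intro x hx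
    by_cases hy : x ∈ Y
    · exact s2 ⟨hy, hx.2⟩
    · exact s4 ⟨hx.1, hy⟩
  rw [dd_eq_S hS s5 s6, dd_eq_S hS s1 s2, dd_eq_S hS s3 s4]
  ring

lemma charge_eq_dd (X : Set ℤ) : charge X = dd X {x : ℤ | x < 0} := by
  have h : X ∩ {x : ℤ | 0 ≤ x} = X \ {x : ℤ | x < 0} := by
    ext x; simp [not_lt]
  rw [charge, dd, h]

lemma isBeta_neg : IsBetaSet {x : ℤ | x < 0} :=
  ⟨⟨0, fun x hx => le_of_lt hx⟩, ⟨0, fun x hx => not_lt.1 hx⟩⟩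

lemma dd_antisymm (X Y : Set ℤ) : dd X Y = - dd Y X := by
  rw [dd, dd]; ring

lemma dd_beta {X Y : Set ℤ} (hX : IsBetaSet X) (hY : IsBetaSet Y) :
    dd X Y = charge X - charge Y := by
  have h := dd_cocycle (beta_diff_finite hX isBeta_neg) (beta_diff_finite isBeta_neg hX)
    (beta_diff_finite isBeta_neg hY) (beta_diff_finite hY isBeta_neg)
  rw [charge_eq_dd, charge_eq_dd, h, dd_antisymm {x : ℤ | x < 0} Y]
  ring

lemma dd_shift (X Y : Set ℤ) (t : ℤ) :
    dd {a : ℤ | a - t ∈ X} {a : ℤ | a - t ∈ Y} = dd X Y := by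
  have e1 : {a : ℤ | a - t ∈ X} \ {a : ℤ | a - t ∈ Y} = (fun x => x + t) '' (X \ Y) := by
    ext a
    constructor
    · rintro ⟨h1, h2⟩; exact ⟨a - t, ⟨h1, h2⟩, by ring⟩
    · rintro ⟨x, ⟨h1, h2⟩, rfl⟩
      refine ⟨by simpa using h1, by simpa using h2⟩
  have e2 : {a : ℤ | a - t ∈ Y} \ {a : ℤ | a - t ∈ X} = (fun x => x + t) '' (Y \ X) := by
    ext a
    constructor
    · rintro ⟨h1, h2⟩; exact ⟨a - t, ⟨h1, h2⟩, by ring⟩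
    · rintro ⟨x, ⟨h1, h2⟩, rfl⟩
      refine ⟨by simpa using h1, by simpa using h2⟩
  rw [dd, e1, e2, Set.ncard_image_of_injective _ (add_left_injective t),
    Set.ncard_image_of_injective _ (add_left_injective t), dd]

lemma beta_shift {Q : Set ℤ} (hQ : IsBetaSet Q) (t : ℤ) : IsBetaSet {a : ℤ | a - t ∈ Q} := by
  obtain ⟨m, hm⟩ := hQ.1
  obtain ⟨b, hb⟩ := hQ.2
  constructor
  · exact ⟨m + t, fun a ha => by have := hm ha; omega⟩
  · exact ⟨b + t, fun a ha => by have := hb ha; omega⟩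

lemma charge_shift {Q : Set ℤ} (hQ : IsBetaSet Q) :
    charge {a : ℤ | a - 1 ∈ Q} = charge Q + 1 := by
  have hQ' : IsBetaSet {a : ℤ | a - 1 ∈ Q} := beta_shift hQ 1
  have hM : IsBetaSet {x : ℤ | x < 1} := ⟨⟨1, fun x hx => le_of_lt hx⟩,
    ⟨1, fun x hx => not_lt.1 hx⟩⟩
  have hMeq : {x : ℤ | x < 1} = {a : ℤ | a - 1 ∈ {x : ℤ | x < 0}} := by
    ext x; simp only [Set.mem_setOf_eq]; omega
  have h1 : dd {a : ℤ | a - 1 ∈ Q} {x : ℤ | x < 1} = dd Q {x : ℤ | x < 0} := by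
    rw [hMeq, dd_shift]
  have h2 : dd {x : ℤ | x < 1} {x : ℤ | x < 0} = 1 := by
    have d1 : {x : ℤ | x < 1} \ {x : ℤ | x < 0} = {0} := by
      ext x; simp only [Set.mem_setOf_eq, Set.mem_diff, Set.mem_singleton_iff, Set.mem_empty_iff_false, iff_false, not_and, not_lt]; omega
    have d2 : {x : ℤ | x < 0} \ {x : ℤ | x < 1} = ∅ := by
      ext x; simp only [Set.mem_setOf_eq, Set.mem_diff, Set.mem_singleton_iff, Set.mem_empty_iff_false, iff_false, not_and, not_lt]; omega
    rw [dd, d1, d2, Set.ncard_singleton, Set.ncard_empty]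
    norm_num
  have hco := dd_cocycle (beta_diff_finite hQ' hM) (beta_diff_finite hM hQ')
    (beta_diff_finite hM isBeta_neg) (beta_diff_finite isBeta_neg hM)
  have := charge_eq_dd {a : ℤ | a - 1 ∈ Q}
  rw [this, hco, h1, h2, ← charge_eq_dd]

lemma quot_beta {B : Set ℤ} (hB : IsBetaSet B) {e : ℤ} (he : 2 ≤ e) (c : ℤ) :
    IsBetaSet {a : ℤ | a * e + c ∈ B} := by
  obtain ⟨m, hm⟩ := hB.1
  obtain ⟨b, hb⟩ := hB.2
  constructor
  · refine ⟨max (m - c) 0, fun a ha => ?_⟩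
    have h1 : a * e + c ≤ m := hm ha
    by_contra h
    push_neg at h
    have ha0 : 0 < a := lt_of_le_of_lt (le_max_right _ _) h
    have : a * 1 ≤ a * e := by
      apply mul_le_mul_of_nonneg_left (by omega) (le_of_lt ha0)
    have : a > m - c := lt_of_le_of_lt (le_max_left _ _) h
    nlinarith
  · refine ⟨min (b - c) 0, fun a ha => ?_⟩
    have h1 : b ≤ a * e + c := hb ha
    by_contra h
    push_neg at h
    have ha0 : a < 0 := lt_of_lt_of_le h (min_le_right _ _)
    have : a * e ≤ a * 1 := by
      apply mul_le_mul_of_nonpos_left (by omega) (le_of_lt ha0)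
    have : a < b - c := lt_of_lt_of_le h (min_le_left _ _)
    nlinarith

/-- The runners `Q_i = {a : a·e + i ∈ B}` of the `e`-quotient of a β-set `B` are β-sets,
and `hub_j(B) = s(Q_j) − s(Q_{(j−1) mod e}) − δ_{j,0}`. -/
theorem hub_eq_charge_sub (e : ℤ) (he : 2 ≤ e) (B : Set ℤ) (hB : IsBetaSet B) :
    (∀ i : ℤ, 0 ≤ i → i ≤ e - 1 → IsBetaSet {a : ℤ | a * e + i ∈ B}) ∧
    (∀ j : ℤ, 0 ≤ j → j ≤ e - 1 →
      hub e j B =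
        charge {a : ℤ | a * e + j ∈ B} - charge {a : ℤ | a * e + (j - 1) % e ∈ B} -
          (if j = 0 then 1 else 0)) := by
  have hmod : ∀ a c : ℤ, (a * e + c) % e = c % e := by
    intro a c
    rw [add_comm]
    exact Int.add_mul_emod_self_right _ _ _
  have hdvd : ∀ c x : ℤ, x % e = c % e ↔ ∃ a : ℤ, x = a * e + c := by
    intro c x
    constructor
    · intro h
      have h0 : (x - c) % e = 0 := Int.emod_eq_emod_iff_emod_sub_eq_zero.mp h
      obtain ⟨a, ha⟩ := Int.dvd_of_emod_eq_zero h0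
      exact ⟨a, by rw [mul_comm] at ha; omega⟩
    · rintro ⟨a, rfl⟩
      exact hmod a c
  have hinj : ∀ c : ℤ, Function.Injective (fun a : ℤ => a * e + c) := by
    intro c a b h
    simp only at h
    have h2 : a * e = b * e := by omega
    exact mul_right_cancel₀ (by omega) h2
  refine ⟨fun i _ _ => quot_beta hB he i, fun j hj0 hj1 => ?_⟩
  have hA : IsBetaSet {a : ℤ | a * e + j ∈ B} := quot_beta hB he j
  have hC : IsBetaSet {a : ℤ | a * e + (j - 1) ∈ B} := quot_beta hB he (j - 1)
  have e1 : {x ∈ B | x % e = j % e ∧ x - 1 ∉ B} =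
      (fun a : ℤ => a * e + j) ''
        ({a : ℤ | a * e + j ∈ B} \ {a : ℤ | a * e + (j - 1) ∈ B}) := by
    ext x
    constructor
    · rintro ⟨hxB, hm, hx1⟩
      obtain ⟨a, rfl⟩ := (hdvd j x).1 hm
      refine ⟨a, ⟨hxB, fun hc => hx1 ?_⟩, rfl⟩
      rw [show a * e + j - 1 = a * e + (j - 1) from by ring]
      exact hc
    · rintro ⟨a, ⟨h1, h2⟩, rfl⟩
      refine ⟨h1, hmod a j, fun hc => h2 ?_⟩
      show a * e + (j - 1) ∈ B
      rw [show a * e + (j - 1) = a * e + j - 1 from by ring]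
      exact hc
  have e2 : {x ∈ B | x % e = (j - 1) % e ∧ x + 1 ∉ B} =
      (fun a : ℤ => a * e + (j - 1)) ''
        ({a : ℤ | a * e + (j - 1) ∈ B} \ {a : ℤ | a * e + j ∈ B}) := by
    ext x
    constructor
    · rintro ⟨hxB, hm, hx1⟩
      obtain ⟨a, rfl⟩ := (hdvd (j - 1) x).1 hm
      refine ⟨a, ⟨hxB, fun hc => hx1 ?_⟩, rfl⟩
      rw [show a * e + (j - 1) + 1 = a * e + j from by ring]
      exact hc
    · rintro ⟨a, ⟨h1, h2⟩, rfl⟩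
      refine ⟨h1, hmod a (j - 1), fun hc => h2 ?_⟩
      show a * e + j ∈ B
      rw [show a * e + j = a * e + (j - 1) + 1 from by ring]
      exact hc
  have hkey : hub e j B =
      charge {a : ℤ | a * e + j ∈ B} - charge {a : ℤ | a * e + (j - 1) ∈ B} := by
    rw [hub, e1, e2, Set.ncard_image_of_injective _ (hinj j),
      Set.ncard_image_of_injective _ (hinj (j - 1))]
    exact dd_beta hA hC
  by_cases hj : j = 0
  · subst hj
    rw [if_pos rfl, hkey]
    have hm1 : ((0 : ℤ) - 1) % e = e - 1 := by
      rw [show ((0 : ℤ) - 1) = (e - 1) + e * (-1) from by ring,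
        Int.add_mul_emod_self_left, Int.emod_eq_of_lt (by omega) (by omega)]
    rw [hm1]
    have hCeq : {a : ℤ | a * e + (0 - 1) ∈ B} =
        {a : ℤ | a - 1 ∈ {a : ℤ | a * e + (e - 1) ∈ B}} := by
      ext a
      simp only [Set.mem_setOf_eq]
      rw [show (a - 1) * e + (e - 1) = a * e + (0 - 1) from by ring]
    rw [hCeq, charge_shift (quot_beta hB he (e - 1))]
    ring
  · rw [if_neg hj, hkey, Int.emod_eq_of_lt (by omega) (by omega)]
    ring
end

section
/- For all subsets B_1,…,B_ℓ ⊆ ℤ one has U(B_2, B_3, …, B_ℓ, B_1^{+e}) = (U(B_1, B_2, …, B_ℓ))^{+e}; that is, cyclically rotating the tuple of β-sets and adding e to every element of the component moved to the last position has the effect of shifting the Uglov set U by e. -/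
/-- Uglov's map `υ_{e,ℓ,i}` : if `x = a·e + b` with `0 ≤ b < e` then
`υ_i(x) = a·e·ℓ + (ℓ−i)·e + b`. -/
def upsilon (e ℓ i x : ℤ) : ℤ := x / e * e * ℓ + (ℓ - i) * e + x % e

/-- Uglov's set `U_{e,ℓ}(B_1,…,B_ℓ) = ⋃_{i=1}^{ℓ} υ_i(B_i)`. -/
def UglovSet (e ℓ : ℤ) (B : ℤ → Set ℤ) : Set ℤ :=
  {y : ℤ | ∃ i x : ℤ, 1 ≤ i ∧ i ≤ ℓ ∧ x ∈ B i ∧ upsilon e ℓ i x = y}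

/-- `U(B_2, …, B_ℓ, B_1^{+e}) = (U(B_1, …, B_ℓ))^{+e}`. -/
theorem uglovSet_rotate (e ℓ : ℤ) (he : 2 ≤ e) (hl : 1 ≤ ℓ) (B : ℤ → Set ℤ) :
    UglovSet e ℓ (fun i => if i = ℓ then (fun x => x + e) '' B 1 else B (i + 1)) =
      (fun x => x + e) '' UglovSet e ℓ B := by
  have he0 : e ≠ 0 := by omega
  have key : ∀ x, upsilon e ℓ ℓ (x + e) = upsilon e ℓ 1 x + e := by
    intro x
    unfold upsilon
    have h1 : (x + e) / e = x / e + 1 := by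
      have := Int.add_mul_ediv_right x 1 he0
      simpa using this
    have h2 : (x + e) % e = x % e := by
      simp [Int.add_mul_emod_self_left (a := x) (b := e) (c := 1)]
    rw [h1, h2]; ring
  have key2 : ∀ i x, upsilon e ℓ i x = upsilon e ℓ (i + 1) x + e := by
    intro i x; unfold upsilon; ring
  ext y
  simp only [UglovSet, Set.mem_setOf_eq, Set.mem_image]
  constructor
  · rintro ⟨i, x, hi1, hil, hx, rfl⟩
    by_cases h : i = ℓ
    · subst h
      simp only [if_pos rfl, Set.mem_image] at hx
      obtain ⟨x0, hx0, rfl⟩ := hx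
      exact ⟨_, ⟨1, x0, le_refl 1, hl, hx0, rfl⟩, (key x0).symm⟩
    · rw [if_neg h] at hx
      exact ⟨upsilon e ℓ (i + 1) x, ⟨i + 1, x, by omega, by omega, hx, rfl⟩,
        (key2 i x).symm⟩
  · rintro ⟨z, ⟨i, x, hi1, hil, hx, rfl⟩, rfl⟩
    by_cases h : i = 1
    · subst h
      refine ⟨ℓ, x + e, hl, le_refl ℓ, ?_, key x⟩
      simp only [if_pos rfl, Set.mem_image]
      exact ⟨x, hx, rfl⟩
    · refine ⟨i - 1, x, by omega, by omega, ?_, by have h := key2 (i - 1) x; rw [sub_add_cancel] at h; exact h⟩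
      rw [if_neg (by omega)]
      simpa using hx
end

section
/- Let B_1,…,B_ℓ ⊆ ℤ and set U := U(B_1,…,B_ℓ). Fix j ∈ {1,…,e−1}. Then the assignment (i,x) ↦ υ_i(x) restricts to a bijection from P_j := {(i,x) : 1 ≤ i ≤ ℓ, x ∈ ℤ, x ≡ j (mod e), exactly one of x and x−1 lies in B_i} onto Q_j := {y ∈ ℤ : y ≡ j (mod e), exactly one of y and y−1 lies in U}. Moreover, for (i,x) ∈ P_j: x ∈ B_i if and only if υ_i(x) ∈ U; if x ∉ B_i then U(B_1,…,B_{i−1}, (B_i ∪ {x})∖{x−1}, B_{i+1},…,B_ℓ) = (U ∪ {υ_i(x)}) ∖ {υ_i(x) − 1}; and if x ∈ B_i then U(B_1,…,B_{i−1}, (B_i ∖ {x}) ∪ {x−1}, B_{i+1},…,B_ℓ) = (U ∖ {υ_i(x)}) ∪ {υ_i(x) − 1}. -/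
namespace UglovAux

/-- The component index recovered from `y`. -/
def ψi (e ℓ y : ℤ) : ℤ := ℓ - (y / e) % ℓ

/-- The preimage element recovered from `y`. -/
def ψx (e ℓ y : ℤ) : ℤ := (y / e) / ℓ * e + y % e

lemma div_emod_of {e a q r : ℤ} (he : 0 < e) (h : a = q * e + r) (h0 : 0 ≤ r) (h1 : r < e) :
    a / e = q ∧ a % e = r :=
  (Int.ediv_emod_unique he).mpr ⟨by rw [h]; ring, h0, h1⟩

variable {e ℓ : ℤ}

lemma emod_nonneg' (he : 0 < e) (x : ℤ) : 0 ≤ x % e := Int.emod_nonneg x he.ne'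
lemma emod_lt' (he : 0 < e) (x : ℤ) : x % e < e := Int.emod_lt_of_pos x he

lemma ups_div (he : 0 < e) (i x : ℤ) :
    upsilon e ℓ i x / e = x / e * ℓ + (ℓ - i) ∧ upsilon e ℓ i x % e = x % e :=
  div_emod_of he (by unfold upsilon; ring) (emod_nonneg' he x) (emod_lt' he x)

lemma psi_ups (he : 0 < e) (hl : 0 < ℓ) {i : ℤ} (hi1 : 1 ≤ i) (hi2 : i ≤ ℓ) (x : ℤ) :
    ψi e ℓ (upsilon e ℓ i x) = i ∧ ψx e ℓ (upsilon e ℓ i x) = x := by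
  have h1 := ups_div (ℓ := ℓ) he i x
  have h2 : (x / e * ℓ + (ℓ - i)) / ℓ = x / e ∧ (x / e * ℓ + (ℓ - i)) % ℓ = ℓ - i :=
    div_emod_of hl (by ring) (by omega) (by omega)
  unfold ψi ψx
  rw [h1.1, h1.2, h2.1, h2.2]
  refine ⟨by ring, ?_⟩
  linear_combination Int.mul_ediv_add_emod x e

lemma ups_psi (he : 0 < e) (hl : 0 < ℓ) (y : ℤ) :
    upsilon e ℓ (ψi e ℓ y) (ψx e ℓ y) = y := by
  have h : ψx e ℓ y / e = (y / e) / ℓ ∧ ψx e ℓ y % e = y % e :=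
    div_emod_of he rfl (emod_nonneg' he y) (emod_lt' he y)
  unfold upsilon ψi
  rw [h.1, h.2]
  linear_combination Int.mul_ediv_add_emod y e + e * Int.mul_ediv_add_emod (y / e) ℓ

lemma psi_i_bounds (he : 0 < e) (hl : 0 < ℓ) (y : ℤ) : 1 ≤ ψi e ℓ y ∧ ψi e ℓ y ≤ ℓ := by
  have h0 := emod_nonneg' hl (y / e)
  have h1 := emod_lt' hl (y / e)
  unfold ψi; omega

lemma psi_x_mod (he : 0 < e) (hl : 0 < ℓ) (y : ℤ) : ψx e ℓ y % e = y % e :=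
  (div_emod_of he rfl (emod_nonneg' he y) (emod_lt' he y)).2

lemma mem_uglov (he : 0 < e) (hl : 0 < ℓ) (B : ℤ → Set ℤ) (y : ℤ) :
    y ∈ UglovSet e ℓ B ↔ ψx e ℓ y ∈ B (ψi e ℓ y) := by
  constructor
  · rintro ⟨i, x, hi1, hi2, hx, rfl⟩
    rw [(psi_ups he hl hi1 hi2 x).1, (psi_ups he hl hi1 hi2 x).2]; exact hx
  · intro h
    exact ⟨_, _, (psi_i_bounds he hl y).1, (psi_i_bounds he hl y).2, h, ups_psi he hl y⟩

lemma eq_ups_iff (he : 0 < e) (hl : 0 < ℓ) {i : ℤ} (hi1 : 1 ≤ i) (hi2 : i ≤ ℓ) (x y : ℤ) :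
    y = upsilon e ℓ i x ↔ ψi e ℓ y = i ∧ ψx e ℓ y = x := by
  constructor
  · rintro rfl; exact psi_ups he hl hi1 hi2 x
  · rintro ⟨h1, h2⟩
    rw [← h1, ← h2]
    exact (ups_psi he hl y).symm

lemma sub_one_div_emod (he : 0 < e) {y : ℤ} (hy : 1 ≤ y % e) :
    (y - 1) / e = y / e ∧ (y - 1) % e = y % e - 1 := by
  refine div_emod_of he ?_ (by omega) (by linarith [emod_lt' he y])
  linear_combination -Int.mul_ediv_add_emod y e

lemma psi_shift (he : 0 < e) (hl : 0 < ℓ) {y : ℤ} (hy : 1 ≤ y % e) :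
    ψi e ℓ (y - 1) = ψi e ℓ y ∧ ψx e ℓ (y - 1) = ψx e ℓ y - 1 := by
  have h := sub_one_div_emod he hy
  unfold ψi ψx
  rw [h.1, h.2]
  exact ⟨rfl, by ring⟩

lemma ups_shift (he : 0 < e) (ℓ i : ℤ) {x : ℤ} (hx : 1 ≤ x % e) :
    upsilon e ℓ i (x - 1) = upsilon e ℓ i x - 1 := by
  have h := sub_one_div_emod he hx
  unfold upsilon
  rw [h.1, h.2]
  ring

end UglovAux

open UglovAux in
/-- The map `(i,x) ↦ υ_i(x)` gives a bijection between the addable/removable data of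
residue `j` of the tuple `(B_1,…,B_ℓ)` and that of `U(B_1,…,B_ℓ)`, compatibly with
adding/removing the corresponding node. -/
theorem uglov_node_bijection (e ℓ : ℤ) (he : 2 ≤ e) (hl : 1 ≤ ℓ) (B : ℤ → Set ℤ)
    (j : ℤ) (hj1 : 1 ≤ j) (hj2 : j ≤ e - 1) :
    Set.BijOn (fun p : ℤ × ℤ => upsilon e ℓ p.1 p.2)
      {p : ℤ × ℤ | 1 ≤ p.1 ∧ p.1 ≤ ℓ ∧ p.2 % e = j % e ∧
        Xor' (p.2 ∈ B p.1) (p.2 - 1 ∈ B p.1)}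
      {y : ℤ | y % e = j % e ∧
        Xor' (y ∈ UglovSet e ℓ B) (y - 1 ∈ UglovSet e ℓ B)} ∧
    (∀ i x : ℤ, 1 ≤ i → i ≤ ℓ → x % e = j % e → Xor' (x ∈ B i) (x - 1 ∈ B i) →
      (x ∈ B i ↔ upsilon e ℓ i x ∈ UglovSet e ℓ B) ∧
      (x ∉ B i →
        UglovSet e ℓ (Function.update B i ((B i ∪ {x}) \ {x - 1})) =
          (UglovSet e ℓ B ∪ {upsilon e ℓ i x}) \ {upsilon e ℓ i x - 1}) ∧
      (x ∈ B i →
        UglovSet e ℓ (Function.update B i ((B i \ {x}) ∪ {x - 1})) =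
          (UglovSet e ℓ B \ {upsilon e ℓ i x}) ∪ {upsilon e ℓ i x - 1})) := by
  have he' : (0:ℤ) < e := by omega
  have hl' : (0:ℤ) < ℓ := by omega
  have hj : j % e = j := Int.emod_eq_of_lt (by omega) (by omega)
  constructor
  · refine ⟨?_, ?_, ?_⟩
    · -- MapsTo
      rintro ⟨i, x⟩ ⟨hi1, hi2, hxm, hxor⟩
      simp only [Set.mem_setOf_eq] at *
      have hmod := (ups_div (ℓ := ℓ) he' i x).2
      have hpsi := psi_ups he' hl' hi1 hi2 x
      have hy1 : 1 ≤ upsilon e ℓ i x % e := by rw [hmod]; omega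
      have hsh := psi_shift he' hl' hy1
      constructor
      · rw [hmod, hxm]
      · have a1 : upsilon e ℓ i x ∈ UglovSet e ℓ B ↔ x ∈ B i := by
          rw [mem_uglov he' hl', hpsi.1, hpsi.2]
        have a2 : upsilon e ℓ i x - 1 ∈ UglovSet e ℓ B ↔ x - 1 ∈ B i := by
          rw [mem_uglov he' hl', hsh.1, hsh.2, hpsi.1, hpsi.2]
        simp only [a1, a2]
        exact hxor
    · -- InjOn
      intro p hp q hq h
      obtain ⟨hp1, hp2, -, -⟩ := hp
      obtain ⟨hq1, hq2, -, -⟩ := hq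
      simp only at h
      have h1 := psi_ups he' hl' hp1 hp2 p.2
      have h2 := psi_ups he' hl' hq1 hq2 q.2
      rw [h] at h1
      have e1 : p.1 = q.1 := h1.1.symm.trans h2.1
      have e2 : p.2 = q.2 := h1.2.symm.trans h2.2
      exact Prod.ext_iff.mpr ⟨e1, e2⟩
    · -- SurjOn
      rintro y ⟨hym, hxor⟩
      have hy1 : 1 ≤ y % e := by omega
      have hsh := psi_shift he' hl' hy1
      refine ⟨(ψi e ℓ y, ψx e ℓ y),
        ⟨(psi_i_bounds he' hl' y).1, (psi_i_bounds he' hl' y).2, ?_, ?_⟩,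
        ups_psi he' hl' y⟩
      · rw [psi_x_mod he' hl', hym]
      · have a1 : (ψx e ℓ y ∈ B (ψi e ℓ y)) ↔ y ∈ UglovSet e ℓ B :=
          (mem_uglov he' hl' B y).symm
        have a2 : (ψx e ℓ y - 1 ∈ B (ψi e ℓ y)) ↔ y - 1 ∈ UglovSet e ℓ B := by
          rw [mem_uglov he' hl', hsh.1, hsh.2]
        simp only [a1, a2]
        exact hxor
  · intro i x hi1 hi2 hxm hxor
    have hx1 : 1 ≤ x % e := by omega
    have hpsi := psi_ups he' hl' hi1 hi2 x
    refine ⟨?_, ?_, ?_⟩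
    · rw [mem_uglov he' hl', hpsi.1, hpsi.2]
    · intro _
      ext y
      have hv : y = upsilon e ℓ i x ↔ ψi e ℓ y = i ∧ ψx e ℓ y = x :=
        eq_ups_iff he' hl' hi1 hi2 x y
      have hv' : y = upsilon e ℓ i x - 1 ↔ ψi e ℓ y = i ∧ ψx e ℓ y = x - 1 := by
        rw [← ups_shift he' ℓ i hx1]
        exact eq_ups_iff he' hl' hi1 hi2 (x - 1) y
      have hxx : x - 1 ≠ x := by omega
      simp only [Set.mem_diff, Set.mem_union, Set.mem_singleton_iff,
        mem_uglov he' hl', hv, hv', Function.update_apply]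
      by_cases hc : ψi e ℓ y = i
      · rw [if_pos hc]
        simp only [hc, Set.mem_diff, Set.mem_union, Set.mem_singleton_iff, true_and]
      · rw [if_neg hc]
        simp only [hc, false_and, or_false, and_false, not_false_iff, and_true]
    · intro _
      ext y
      have hv : y = upsilon e ℓ i x ↔ ψi e ℓ y = i ∧ ψx e ℓ y = x :=
        eq_ups_iff he' hl' hi1 hi2 x y
      have hv' : y = upsilon e ℓ i x - 1 ↔ ψi e ℓ y = i ∧ ψx e ℓ y = x - 1 := by
        rw [← ups_shift he' ℓ i hx1]
        exact eq_ups_iff he' hl' hi1 hi2 (x - 1) y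
      have hxx : x - 1 ≠ x := by omega
      simp only [Set.mem_diff, Set.mem_union, Set.mem_singleton_iff,
        mem_uglov he' hl', hv, hv', Function.update_apply]
      by_cases hc : ψi e ℓ y = i
      · rw [if_pos hc]
        simp only [hc, Set.mem_diff, Set.mem_union, Set.mem_singleton_iff, true_and]
      · rw [if_neg hc]
        simp only [hc, false_and, or_false, and_false, not_false_iff, and_true]
end

section
/- Let B_1,…,B_ℓ be β-sets. Then there exist an integer N ≥ 0 and residues j_1,…,j_N ∈ {0,…,e−1} such that, if (C_1,…,C_ℓ) denotes the tuple obtained from (B_1,…,B_ℓ) by successively replacing every component by its image under f_{j_1}, then under f_{j_2}, …, then under f_{j_N}, one has Σ_{i=1}^{ℓ} hub_j(C_i) ≤ 0 for every j ∈ {0,…,e−1}. -/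
/-- The involution `f_j` of ℤ : `x ↦ x−1` if `x ≡ j (mod e)`, `x ↦ x+1` if
`x ≡ j−1 (mod e)`, and `x ↦ x` otherwise. -/
def sAct (e j x : ℤ) : ℤ :=
  if x % e = j % e then x - 1 else if x % e = (j - 1) % e then x + 1 else x

/-! ### Auxiliary machinery -/

open Classical in
/-- Weight of a position: `x` if `x ∈ B` minus `x` if `x ≤ 0`; always nonnegative,
and nonzero only on the symmetric difference of `B` with `(-∞,0]`. -/
noncomputable def wgtBS (B : Set ℤ) (x : ℤ) : ℤ :=
  (if x ∈ B then x else 0) - (if x ≤ 0 then x else 0)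

/-- Potential of a set. -/
noncomputable def phiBS (B : Set ℤ) : ℤ := ∑ᶠ x, wgtBS B x

lemma wgtBS_nonneg (B : Set ℤ) (x : ℤ) : 0 ≤ wgtBS B x := by
  unfold wgtBS; split_ifs <;> omega

lemma phiBS_nonneg (B : Set ℤ) : 0 ≤ phiBS B := finsum_nonneg (wgtBS_nonneg B)

lemma modSub {e j x : ℤ} (h : x % e = j % e) : (x - 1) % e = (j - 1) % e := by
  rw [Int.sub_emod, h, ← Int.sub_emod]

lemma modAdd {e j x : ℤ} (h : x % e = (j - 1) % e) : (x + 1) % e = j % e := by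
  have h2 : (x + 1) % e = ((j - 1) + 1) % e := by
    rw [Int.add_emod, h, ← Int.add_emod]
  simpa using h2

lemma mod_ne {e : ℤ} (he : 2 ≤ e) (j : ℤ) : j % e ≠ (j - 1) % e := by
  intro h
  have h2 : (1 : ℤ) % e = 0 := by
    rw [show (1:ℤ) = j - (j-1) by ring, Int.sub_emod, h, sub_self, Int.zero_emod]
  have h3 : (1:ℤ) % e = 1 := Int.emod_eq_of_lt (by norm_num) (by omega)
  omega

lemma sAct_le (e j x : ℤ) : sAct e j x ≤ x + 1 := by
  unfold sAct; split_ifs <;> omega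

lemma sAct_ge (e j x : ℤ) : x - 1 ≤ sAct e j x := by
  unfold sAct; split_ifs <;> omega

lemma sAct_invol {e : ℤ} (he : 2 ≤ e) (j x : ℤ) : sAct e j (sAct e j x) = x := by
  by_cases h1 : x % e = j % e
  · have hfx : sAct e j x = x - 1 := if_pos h1
    have hs : (x - 1) % e = (j - 1) % e := modSub h1
    rw [hfx]
    unfold sAct
    rw [if_neg (by rw [hs]; exact fun hh => mod_ne he j hh.symm), if_pos hs]
    ring
  · by_cases h2 : x % e = (j - 1) % e
    · have hfx : sAct e j x = x + 1 := by unfold sAct; rw [if_neg h1, if_pos h2]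
      have hr : (x + 1) % e = j % e := modAdd h2
      rw [hfx]
      unfold sAct
      rw [if_pos hr]
      ring
    · have hfx : sAct e j x = x := by unfold sAct; rw [if_neg h1, if_neg h2]
      rw [hfx, hfx]

lemma mem_sAct_image {e : ℤ} (he : 2 ≤ e) (j : ℤ) (B : Set ℤ) (y : ℤ) :
    y ∈ sAct e j '' B ↔ sAct e j y ∈ B := by
  constructor
  · rintro ⟨x, hx, rfl⟩; rwa [sAct_invol he]
  · intro h; exact ⟨_, h, sAct_invol he j y⟩

lemma isBetaSet_sAct {e : ℤ} (he : 2 ≤ e) (j : ℤ) {B : Set ℤ} (hB : IsBetaSet B) :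
    IsBetaSet (sAct e j '' B) := by
  obtain ⟨⟨a, ha⟩, ⟨b, hb⟩⟩ := hB
  constructor
  · refine ⟨a + 1, ?_⟩
    rintro y ⟨x, hx, rfl⟩
    have h1 : x ≤ a := ha hx
    have h2 : sAct e j x ≤ x + 1 := sAct_le e j x
    omega
  · refine ⟨b - 1, ?_⟩
    intro y hy
    have h0 : sAct e j y ∉ B := fun h => hy ((mem_sAct_image he j B y).2 h)
    have h1 : b ≤ sAct e j y := hb h0
    have h2 : sAct e j y ≤ y + 1 := sAct_le e j y
    omega

lemma phiBS_eq_sum {B : Set ℤ} {a b L M : ℤ}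
    (ha : ∀ x ∈ B, x ≤ a) (hb : ∀ x : ℤ, x < b → x ∈ B)
    (hL : L ≤ b) (hL0 : L ≤ 0) (hM : a ≤ M) (hM0 : 0 ≤ M) :
    phiBS B = ∑ x ∈ Finset.Icc L M, wgtBS B x := by
  classical
  apply finsum_eq_sum_of_support_subset
  intro x hx
  simp only [Function.mem_support] at hx
  simp only [Finset.coe_Icc, Set.mem_Icc]
  by_contra hc
  rw [not_and_or] at hc
  apply hx
  unfold wgtBS
  rcases hc with hc | hc
  · push_neg at hc
    have hxB : x ∈ B := hb x (by omega)
    rw [if_pos hxB, if_pos (by omega : x ≤ 0)]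
    ring
  · push_neg at hc
    have hxB : x ∉ B := fun h => by have := ha x h; omega
    rw [if_neg hxB, if_neg (by omega : ¬ x ≤ 0)]
    ring

open Classical in
/-- Correction term for the summation-by-pairs argument. -/
noncomputable def corrBS (e j : ℤ) (B : Set ℤ) (y : ℤ) : ℤ :=
  -(if y % e = (j - 1) % e ∧ (y ∈ B ∨ y + 1 ∈ B) then 1 else 0) - (if y ∈ B then y else 0)

open Classical in
lemma pt_identity {e : ℤ} (he : 2 ≤ e) (j : ℤ) (B : Set ℤ) (x : ℤ) :
    (if x ∈ B then x else 0) - (if sAct e j x ∈ B then x else 0)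
      = ((if x ∈ B ∧ x % e = j % e ∧ x - 1 ∉ B then (1:ℤ) else 0)
          - (if x ∈ B ∧ x % e = (j - 1) % e ∧ x + 1 ∉ B then 1 else 0))
        + (corrBS e j B (sAct e j x) - corrBS e j B x) := by
  by_cases h1 : x % e = j % e
  · have hfx : sAct e j x = x - 1 := if_pos h1
    have hs : (x - 1) % e = (j - 1) % e := modSub h1
    have h2 : ¬ x % e = (j - 1) % e := by rw [h1]; exact mod_ne he j
    have hxx : x - 1 + 1 = x := by ring
    rw [hfx]
    unfold corrBS
    rw [hxx]
    by_cases hxB : x ∈ B <;> by_cases hx1 : x - 1 ∈ B <;>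
      simp [hxB, hx1, h1, h2, hs] <;> omega
  · by_cases h2 : x % e = (j - 1) % e
    · have hfx : sAct e j x = x + 1 := by unfold sAct; rw [if_neg h1, if_pos h2]
      have hr : (x + 1) % e = j % e := modAdd h2
      have hr2 : ¬ (x + 1) % e = (j - 1) % e := by rw [hr]; exact mod_ne he j
      rw [hfx]
      unfold corrBS
      by_cases hxB : x ∈ B <;> by_cases hx1 : x + 1 ∈ B <;>
        simp [hxB, hx1, h1, h2, hr2] <;> omega
    · have hfx : sAct e j x = x := by unfold sAct; rw [if_neg h1, if_neg h2]
      rw [hfx]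
      simp [h1, h2]

lemma phiBS_sAct {e : ℤ} (he : 2 ≤ e) (j : ℤ) {B : Set ℤ} (hB : IsBetaSet B) :
    phiBS (sAct e j '' B) = phiBS B - hub e j B := by
  classical
  obtain ⟨⟨a, ha0⟩, ⟨b, hb0⟩⟩ := hB
  have ha : ∀ x ∈ B, x ≤ a := fun x hx => ha0 hx
  have hb : ∀ x : ℤ, x < b → x ∈ B := by
    intro x hx
    by_contra h
    have := hb0 h
    omega
  -- choose the interval [L, M]
  obtain ⟨L, hLmod, hLle⟩ : ∃ L : ℤ, L % e = (j - 1) % e ∧ L ≤ min (b - 1) 0 := by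
    refine ⟨(j - 1) % e + e * (-((((j - 1) % e - min (b - 1) 0).toNat : ℤ))), ?_, ?_⟩
    · rw [Int.add_mul_emod_self_left, Int.emod_emod_of_dvd _ dvd_rfl]
    · have h1 : ((j - 1) % e - min (b - 1) 0) ≤ ((((j - 1) % e - min (b - 1) 0).toNat : ℤ)) :=
        Int.self_le_toNat _
      have h2 : (0:ℤ) ≤ ((((j - 1) % e - min (b - 1) 0).toNat : ℤ)) := Int.natCast_nonneg _
      have h3 : ((((j - 1) % e - min (b - 1) 0).toNat : ℤ)) ≤
          e * ((((j - 1) % e - min (b - 1) 0).toNat : ℤ)) := by nlinarith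
      have h4 : (j - 1) % e + e * (-((((j - 1) % e - min (b - 1) 0).toNat : ℤ)))
          = (j - 1) % e - e * ((((j - 1) % e - min (b - 1) 0).toNat : ℤ)) := by ring
      linarith [h4]
  obtain ⟨M, hMmod, hMge⟩ : ∃ M : ℤ, M % e = j % e ∧ max (a + 1) 0 ≤ M := by
    refine ⟨j % e + e * ((max (a + 1) 0 - j % e).toNat), ?_, ?_⟩
    · rw [Int.add_mul_emod_self_left, Int.emod_emod_of_dvd _ dvd_rfl]
    · have h1 : (max (a + 1) 0 - j % e) ≤ (((max (a + 1) 0 - j % e).toNat : ℤ)) :=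
        Int.self_le_toNat _
      have h2 : (0:ℤ) ≤ (((max (a + 1) 0 - j % e).toNat : ℤ)) := Int.natCast_nonneg _
      have h3 : (((max (a + 1) 0 - j % e).toNat : ℤ)) ≤
          e * (((max (a + 1) 0 - j % e).toNat : ℤ)) := by nlinarith
      linarith
  set T : Finset ℤ := Finset.Icc L M with hT
  have hLb : L ≤ b - 1 := le_trans hLle (min_le_left _ _)
  have hL0 : L ≤ 0 := le_trans hLle (min_le_right _ _)
  have hMa : a + 1 ≤ M := le_trans (le_max_left _ _) hMge
  have hM0 : 0 ≤ M := le_trans (le_max_right _ _) hMge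
  have hinv : ∀ x, sAct e j (sAct e j x) = x := sAct_invol he j
  have hmem : ∀ y, (y ∈ sAct e j '' B) ↔ sAct e j y ∈ B := mem_sAct_image he j B
  -- T is closed under sAct
  have hfT : ∀ x ∈ T, sAct e j x ∈ T := by
    intro x hx
    rw [hT, Finset.mem_Icc] at hx ⊢
    by_cases h1 : x % e = j % e
    · have hfx : sAct e j x = x - 1 := if_pos h1
      have hxL : x ≠ L := by
        rintro rfl
        rw [hLmod] at h1
        exact mod_ne he j h1.symm
      omega
    · by_cases h2 : x % e = (j - 1) % e
      · have hfx : sAct e j x = x + 1 := by unfold sAct; rw [if_neg h1, if_pos h2]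
        have hxM : x ≠ M := by
          rintro rfl
          rw [hMmod] at h2
          exact mod_ne he j h2
        omega
      · have hfx : sAct e j x = x := by unfold sAct; rw [if_neg h1, if_neg h2]
        omega
  -- bounds for the image set
  have ha' : ∀ x ∈ sAct e j '' B, x ≤ a + 1 := by
    intro x hx
    rw [hmem] at hx
    have h1 := ha _ hx
    have h2 := sAct_ge e j x
    omega
  have hb' : ∀ x : ℤ, x < b - 1 → x ∈ sAct e j '' B := by
    intro x hx
    rw [hmem]
    apply hb
    have := sAct_le e j x
    omega
  have hsum1 : phiBS B = ∑ x ∈ T, wgtBS B x :=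
    phiBS_eq_sum ha hb (by omega) (by omega) (by omega) (by omega)
  have hsum2 : phiBS (sAct e j '' B) = ∑ x ∈ T, wgtBS (sAct e j '' B) x :=
    phiBS_eq_sum ha' hb' (by omega) (by omega) (by omega) (by omega)
  -- permutation invariance of the correction sum
  have hperm : ∑ x ∈ T, corrBS e j B (sAct e j x) = ∑ x ∈ T, corrBS e j B x := by
    have hinj : ∀ x ∈ T, ∀ y ∈ T, sAct e j x = sAct e j y → x = y := by
      intro x _ y _ hxy
      rw [← hinv x, hxy, hinv]
    have himg : T.image (sAct e j) = T := by
      apply Finset.ext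
      intro y
      constructor
      · rw [Finset.mem_image]
        rintro ⟨x, hx, rfl⟩
        exact hfT x hx
      · intro hy
        rw [Finset.mem_image]
        exact ⟨sAct e j y, hfT y hy, hinv y⟩
    calc ∑ x ∈ T, corrBS e j B (sAct e j x)
        = ∑ y ∈ T.image (sAct e j), corrBS e j B y := (Finset.sum_image hinj).symm
      _ = ∑ y ∈ T, corrBS e j B y := by rw [himg]
  -- the main sum computation
  have key : ∑ x ∈ T, wgtBS B x - ∑ x ∈ T, wgtBS (sAct e j '' B) x
      = ∑ x ∈ T, ((if x ∈ B ∧ x % e = j % e ∧ x - 1 ∉ B then (1:ℤ) else 0)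
          - (if x ∈ B ∧ x % e = (j - 1) % e ∧ x + 1 ∉ B then 1 else 0)) := by
    rw [← Finset.sum_sub_distrib]
    have step1 : ∀ x ∈ T, wgtBS B x - wgtBS (sAct e j '' B) x
        = (if x ∈ B then x else 0) - (if sAct e j x ∈ B then x else 0) := by
      intro x _
      unfold wgtBS
      rw [if_congr (hmem x) rfl rfl]
      ring
    calc ∑ x ∈ T, (wgtBS B x - wgtBS (sAct e j '' B) x)
        = ∑ x ∈ T, (((if x ∈ B ∧ x % e = j % e ∧ x - 1 ∉ B then (1:ℤ) else 0)
            - (if x ∈ B ∧ x % e = (j - 1) % e ∧ x + 1 ∉ B then 1 else 0))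
            + (corrBS e j B (sAct e j x) - corrBS e j B x)) := by
          refine Finset.sum_congr rfl fun x hx => ?_
          rw [step1 x hx]
          exact pt_identity he j B x
      _ = (∑ x ∈ T, ((if x ∈ B ∧ x % e = j % e ∧ x - 1 ∉ B then (1:ℤ) else 0)
            - (if x ∈ B ∧ x % e = (j - 1) % e ∧ x + 1 ∉ B then 1 else 0)))
            + (∑ x ∈ T, corrBS e j B (sAct e j x) - ∑ x ∈ T, corrBS e j B x) := by
          simp only [Finset.sum_add_distrib, Finset.sum_sub_distrib]
      _ = ∑ x ∈ T, ((if x ∈ B ∧ x % e = j % e ∧ x - 1 ∉ B then (1:ℤ) else 0)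
            - (if x ∈ B ∧ x % e = (j - 1) % e ∧ x + 1 ∉ B then 1 else 0)) := by
          rw [hperm]; ring
  -- identify the hub
  have hA1 : {x ∈ B | x % e = j % e ∧ x - 1 ∉ B}
      = ↑(T.filter fun x => x ∈ B ∧ x % e = j % e ∧ x - 1 ∉ B) := by
    ext x
    simp only [Set.mem_setOf_eq, Finset.coe_filter, Finset.mem_Icc, hT]
    constructor
    · rintro ⟨hxB, hxr, hx1⟩
      have h1 : x ≤ a := ha x hxB
      have h2 : ¬ (x - 1 < b) := fun h => hx1 (hb _ h)
      exact ⟨⟨by omega, by omega⟩, hxB, hxr, hx1⟩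
    · tauto
  have hA2 : {x ∈ B | x % e = (j - 1) % e ∧ x + 1 ∉ B}
      = ↑(T.filter fun x => x ∈ B ∧ x % e = (j - 1) % e ∧ x + 1 ∉ B) := by
    ext x
    simp only [Set.mem_setOf_eq, Finset.coe_filter, Finset.mem_Icc, hT]
    constructor
    · rintro ⟨hxB, hxr, hx1⟩
      have h1 : x ≤ a := ha x hxB
      have h2 : ¬ (x + 1 < b) := fun h => hx1 (hb _ h)
      exact ⟨⟨by omega, by omega⟩, hxB, hxr, hx1⟩
    · tauto
  have hhub : hub e j B
      = ((T.filter fun x => x ∈ B ∧ x % e = j % e ∧ x - 1 ∉ B).card : ℤ)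
        - ((T.filter fun x => x ∈ B ∧ x % e = (j - 1) % e ∧ x + 1 ∉ B).card : ℤ) := by
    unfold hub
    rw [hA1, hA2, Set.ncard_coe_finset, Set.ncard_coe_finset]
  have hcount : ∑ x ∈ T, ((if x ∈ B ∧ x % e = j % e ∧ x - 1 ∉ B then (1:ℤ) else 0)
      - (if x ∈ B ∧ x % e = (j - 1) % e ∧ x + 1 ∉ B then 1 else 0)) = hub e j B := by
    rw [Finset.sum_sub_distrib, Finset.sum_boole, Finset.sum_boole, hhub]
  rw [hsum1, hsum2] at *
  omega

/-! ### The descent -/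

lemma key_induction (e ℓ : ℤ) (he : 2 ≤ e) :
    ∀ (n : ℕ) (B : ℤ → Set ℤ), (∀ i : ℤ, 1 ≤ i → i ≤ ℓ → IsBetaSet (B i)) →
      (∑ i ∈ Finset.Icc (1 : ℤ) ℓ, phiBS (B i)) ≤ (n : ℤ) →
      ∃ js : List ℤ, (∀ j ∈ js, 0 ≤ j ∧ j ≤ e - 1) ∧
        ∀ j : ℤ, 0 ≤ j → j ≤ e - 1 →
          (∑ i ∈ Finset.Icc (1 : ℤ) ℓ,
            hub e j (js.foldl (fun S r => sAct e r '' S) (B i))) ≤ 0 := by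
  intro n
  induction n using Nat.strong_induction_on with
  | _ n ih =>
    intro B hB hsum
    by_cases hall : ∀ j : ℤ, 0 ≤ j → j ≤ e - 1 →
        (∑ i ∈ Finset.Icc (1 : ℤ) ℓ, hub e j (B i)) ≤ 0
    · refine ⟨[], by simp, fun j h1 h2 => ?_⟩
      simpa using hall j h1 h2
    · push_neg at hall
      obtain ⟨j, hj0, hj1, hjpos⟩ := hall
      set B' : ℤ → Set ℤ := fun i => sAct e j '' B i with hB'def
      have hB' : ∀ i : ℤ, 1 ≤ i → i ≤ ℓ → IsBetaSet (B' i) :=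
        fun i h1 h2 => isBetaSet_sAct he j (hB i h1 h2)
      have hphi' : ∑ i ∈ Finset.Icc (1 : ℤ) ℓ, phiBS (B' i)
          = ∑ i ∈ Finset.Icc (1 : ℤ) ℓ, phiBS (B i)
            - ∑ i ∈ Finset.Icc (1 : ℤ) ℓ, hub e j (B i) := by
        rw [← Finset.sum_sub_distrib]
        refine Finset.sum_congr rfl fun i hi => ?_
        rw [Finset.mem_Icc] at hi
        exact phiBS_sAct he j (hB i hi.1 hi.2)
      have hnn : 0 ≤ ∑ i ∈ Finset.Icc (1 : ℤ) ℓ, phiBS (B' i) :=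
        Finset.sum_nonneg fun i _ => phiBS_nonneg _
      have hn1 : 1 ≤ n := by
        by_contra h
        have : n = 0 := by omega
        subst this
        simp only [Nat.cast_zero] at hsum
        omega
      have hsum' : ∑ i ∈ Finset.Icc (1 : ℤ) ℓ, phiBS (B' i) ≤ ((n - 1 : ℕ) : ℤ) := by
        rw [Nat.cast_sub hn1]
        push_cast
        omega
      obtain ⟨js', hjs'1, hjs'2⟩ := ih (n - 1) (by omega) B' hB' hsum'
      refine ⟨j :: js', ?_, ?_⟩
      · intro r hr
        rcases List.mem_cons.1 hr with rfl | hr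
        · exact ⟨hj0, hj1⟩
        · exact hjs'1 r hr
      · intro j' h1 h2
        have := hjs'2 j' h1 h2
        simpa only [List.foldl_cons] using this

/-- Starting from β-sets `B_1,…,B_ℓ`, one can successively apply maps `f_{j_1},…,f_{j_N}`
(to every component) so that the resulting tuple `(C_1,…,C_ℓ)` satisfies
`Σ_{i=1}^{ℓ} hub_j(C_i) ≤ 0` for every residue `j`. -/
theorem exists_residue_sequence_hub_nonpos (e ℓ : ℤ) (he : 2 ≤ e) (hl : 1 ≤ ℓ)
    (B : ℤ → Set ℤ) (hB : ∀ i : ℤ, 1 ≤ i → i ≤ ℓ → IsBetaSet (B i)) :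
    ∃ js : List ℤ, (∀ j ∈ js, 0 ≤ j ∧ j ≤ e - 1) ∧
      ∀ j : ℤ, 0 ≤ j → j ≤ e - 1 →
        (∑ i ∈ Finset.Icc (1 : ℤ) ℓ,
          hub e j (js.foldl (fun S r => sAct e r '' S) (B i))) ≤ 0 := by
  have hS : 0 ≤ ∑ i ∈ Finset.Icc (1 : ℤ) ℓ, phiBS (B i) :=
    Finset.sum_nonneg fun i _ => phiBS_nonneg _
  exact key_induction e ℓ he (∑ i ∈ Finset.Icc (1 : ℤ) ℓ, phiBS (B i)).toNat B hB
    (by rw [Int.toNat_of_nonneg hS])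
end

section
/- Let z = (z_1,…,z_e) be a tuple of nonnegative integers, let I be a finite set of nonnegative integers with 0 ∈ I, and let τ be an (I,z)-admissible permutation of {1,…,e}. If j, j′ ∈ {1,…,e} are such that z_{τ(j)} > z_{τ(j′)} and ht_I(z_{τ(j)}) ≥ z_{τ(j′)}, then j < j′. -/
/-- `ht_I(b) = max{i ∈ I : i ≤ b}` (assuming `0 ∈ I`). -/
def htI (I : Finset ℕ) (b : ℕ) : ℕ := (I.filter fun i => i ≤ b).sup id

/-- The `(I,z)`-admissibility condition for a permutation `τ` of `{1,…,e}`. -/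
def Admissible (e : ℕ) (I : Finset ℕ) (z : Fin e → ℕ) (τ : Equiv.Perm (Fin e)) : Prop :=
  ∀ (j : ℕ) (hj : j + 1 < e),
    htI I (z (τ ⟨j + 1, hj⟩)) ≤ htI I (z (τ ⟨j, by omega⟩)) ∧
    (htI I (z (τ ⟨j, by omega⟩)) = htI I (z (τ ⟨j + 1, hj⟩)) →
      (z (τ ⟨j + 1, hj⟩) < z (τ ⟨j, by omega⟩) ∧
        z (τ ⟨j + 1, hj⟩) = htI I (z (τ ⟨j + 1, hj⟩))) ∨
      (τ ⟨j, by omega⟩ < τ ⟨j + 1, hj⟩ ∧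
        (z (τ ⟨j, by omega⟩) = z (τ ⟨j + 1, hj⟩) ∨
          (htI I (z (τ ⟨j + 1, hj⟩)) < z (τ ⟨j, by omega⟩) ∧
            htI I (z (τ ⟨j + 1, hj⟩)) < z (τ ⟨j + 1, hj⟩)))))

lemma htI_le_self (I : Finset ℕ) (b : ℕ) : htI I b ≤ b :=
  Finset.sup_le fun i hi => (Finset.mem_filter.mp hi).2

lemma adm_anti (e : ℕ) (I : Finset ℕ) (z : Fin e → ℕ) (τ : Equiv.Perm (Fin e))
    (hτ : Admissible e I z τ) :
    ∀ b a : ℕ, ∀ (ha : a < e) (hb : b < e), a ≤ b →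
      htI I (z (τ ⟨b, hb⟩)) ≤ htI I (z (τ ⟨a, ha⟩)) := by
  intro b
  induction b with
  | zero => intro a ha hb hab; interval_cases a; exact le_rfl
  | succ n ih =>
    intro a ha hb hab
    rcases Nat.lt_or_ge a (n + 1) with h | h
    · exact le_trans (hτ n hb).1 (ih a ha (by omega) (by omega))
    · have : a = n + 1 := by omega
      subst this; exact le_rfl

/-- If `τ` is `(I,z)`-admissible, `z_{τ(j)} > z_{τ(j′)}` and
`ht_I(z_{τ(j)}) ≥ z_{τ(j′)}`, then `j < j′`. -/
theorem admissible_lt (e : ℕ) (he : 1 ≤ e) (I : Finset ℕ) (hI : 0 ∈ I)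
    (z : Fin e → ℕ) (τ : Equiv.Perm (Fin e)) (hτ : Admissible e I z τ)
    (j j' : Fin e) (h1 : z (τ j') < z (τ j)) (h2 : z (τ j') ≤ htI I (z (τ j))) :
    j < j' := by
  by_contra hlt
  push_neg at hlt
  -- hlt : j' ≤ j
  have hj'j : (j' : ℕ) ≤ (j : ℕ) := hlt
  have hje : (j : ℕ) < e := j.isLt
  have hj'e : (j' : ℕ) < e := j'.isLt
  have hj'eta : (⟨(j' : ℕ), hj'e⟩ : Fin e) = j' := rfl
  have hjeta : (⟨(j : ℕ), hje⟩ : Fin e) = j := rfl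
  -- htI is constant = z (τ j') on positions between j' and j
  have hconst : ∀ k (hk1 : (j' : ℕ) ≤ k) (hk2 : k ≤ (j : ℕ)),
      htI I (z (τ ⟨k, by omega⟩)) = z (τ j') := by
    intro k hk1 hk2
    have hup : htI I (z (τ ⟨k, by omega⟩)) ≤ htI I (z (τ ⟨(j' : ℕ), hj'e⟩)) :=
      adm_anti e I z τ hτ k (j' : ℕ) hj'e (by omega) hk1
    have hdown : htI I (z (τ ⟨(j : ℕ), hje⟩)) ≤ htI I (z (τ ⟨k, by omega⟩)) :=
      adm_anti e I z τ hτ (j : ℕ) k (by omega) hje hk2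
    have hdown' : htI I (z (τ j)) ≤ htI I (z (τ ⟨k, by omega⟩)) := hdown
    have hup' : htI I (z (τ ⟨k, by omega⟩)) ≤ htI I (z (τ j')) := hup
    have := htI_le_self I (z (τ j'))
    omega
  -- z is constant along the chain
  have key : ∀ d (hd : (j' : ℕ) + d ≤ (j : ℕ)),
      z (τ ⟨(j' : ℕ) + d, by omega⟩) = z (τ j') := by
    intro d
    induction d with
    | zero => intro _; rfl
    | succ n ihn =>
      intro hd
      have hk1 : (j' : ℕ) + n + 1 < e := by omega
      have hzk : z (τ ⟨(j' : ℕ) + n, by omega⟩) = z (τ j') := ihn (by omega)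
      have hEk : htI I (z (τ ⟨(j' : ℕ) + n, by omega⟩)) = z (τ j') :=
        hconst ((j' : ℕ) + n) (by omega) (by omega)
      have hEk1 : htI I (z (τ ⟨(j' : ℕ) + n + 1, by omega⟩)) = z (τ j') :=
        hconst ((j' : ℕ) + n + 1) (by omega) (by omega)
      have h2' := (hτ ((j' : ℕ) + n) hk1).2
      have heq : htI I (z (τ ⟨(j' : ℕ) + n, by omega⟩)) =
          htI I (z (τ ⟨(j' : ℕ) + n + 1, hk1⟩)) := by
        rw [hEk]; exact hEk1.symm
      rcases h2' heq with ⟨hlt', heq'⟩ | ⟨_, hor⟩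
      · -- z(k+1) < z(k) = h but z(k+1) = htI(z(k+1)) = h
        rw [hEk1] at heq'
        show z (τ ⟨(j' : ℕ) + n + 1, hk1⟩) = z (τ j')
        omega
      · rcases hor with heqz | ⟨hh1, _⟩
        · show z (τ ⟨(j' : ℕ) + n + 1, hk1⟩) = z (τ j')
          omega
        · rw [hEk1] at hh1; omega
  have hfin : z (τ ⟨(j' : ℕ) + ((j : ℕ) - (j' : ℕ)), by omega⟩) = z (τ j') :=
    key ((j : ℕ) - (j' : ℕ)) (by omega)
  have : (⟨(j' : ℕ) + ((j : ℕ) - (j' : ℕ)), by omega⟩ : Fin e) = j := by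
    ext; simp; omega
  rw [this] at hfin
  omega
end

section
/- For every tuple z = (z_1,…,z_e) of nonnegative integers and every finite set I of nonnegative integers with 0 ∈ I, there exists exactly one (I,z)-admissible permutation of {1,…,e}. -/
/-- There is exactly one `(I,z)`-admissible permutation of `{1,…,e}`. -/
theorem existsUnique_admissible (e : ℕ) (he : 1 ≤ e) (I : Finset ℕ) (hI : 0 ∈ I)
    (z : Fin e → ℕ) :
    ∃! τ : Equiv.Perm (Fin e), Admissible e I z τ := by
  classical
  set M := I.sup id with hM
  have hht_le : ∀ b, htI I b ≤ b := by
    intro b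
    refine Finset.sup_le fun i hi => ?_
    simpa using (Finset.mem_filter.mp hi).2
  have hht_M : ∀ b, htI I b ≤ M := fun b =>
    Finset.sup_mono (Finset.filter_subset _ _)
  set g : Fin e → ℕ ×ₗ (ℕ ×ₗ ℕ) := fun i =>
    toLex (M - htI I (z i), toLex ((if z i = htI I (z i) then 1 else 0), i.val)) with hg
  have hkey : ∀ a b : Fin e,
      (htI I (z b) ≤ htI I (z a) ∧
        (htI I (z a) = htI I (z b) →
          (z b < z a ∧ z b = htI I (z b)) ∨
          (a < b ∧ (z a = z b ∨ (htI I (z b) < z a ∧ htI I (z b) < z b))))) ↔ g a < g b := by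
    intro a b
    have ha1 := hht_le (z a); have ha2 := hht_M (z a)
    have hb1 := hht_le (z b); have hb2 := hht_M (z b)
    simp only [hg, Prod.Lex.lt_iff, Fin.lt_def]
    split_ifs <;> norm_num <;> omega
  have hginj : Function.Injective g := by
    intro a b hab
    simp only [hg] at hab
    have h1 := toLex.injective hab
    have h2 := toLex.injective (congrArg Prod.snd h1)
    exact Fin.ext (congrArg Prod.snd h2)
  have hadmP : ∀ τ : Equiv.Perm (Fin e), Admissible e I z τ ↔
      ∀ (j : ℕ) (hj : j + 1 < e), g (τ ⟨j, by omega⟩) < g (τ ⟨j + 1, hj⟩) := by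
    intro τ
    unfold Admissible
    exact forall_congr' fun j => forall_congr' fun hj => hkey _ _
  have hstep : ∀ τ : Equiv.Perm (Fin e),
      (∀ (j : ℕ) (hj : j + 1 < e), g (τ ⟨j, by omega⟩) < g (τ ⟨j + 1, hj⟩)) →
      StrictMono (g ∘ τ) := by
    intro τ hτ
    rintro ⟨i, hi⟩ ⟨j, hj⟩ hij
    simp only [Fin.lt_def] at hij
    induction j with
    | zero => omega
    | succ k ih =>
      rcases Nat.lt_or_ge i k with h | h
      · exact lt_trans (ih (by omega) (by omega)) (hτ k hj)
      · have hik : i = k := by omega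
        subst hik
        exact hτ i hj
  have hmono : ∀ τ : Equiv.Perm (Fin e), Admissible e I z τ ↔ Monotone (g ∘ τ) := by
    intro τ
    rw [hadmP]
    constructor
    · intro h
      exact (hstep τ h).monotone
    · intro h j hj
      have hinj : Function.Injective (g ∘ τ) := hginj.comp τ.injective
      have := h.strictMono_of_injective hinj
      exact this (by simp [Fin.lt_def])
  refine ⟨Tuple.sort g, ?_, ?_⟩
  · exact (hmono _).mpr (by simpa using Tuple.monotone_sort g)
  · intro τ hτ
    have h1 : g ∘ τ = g ∘ Tuple.sort g :=
      (Tuple.comp_sort_eq_comp_iff_monotone).mpr ((hmono τ).mp hτ)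
    exact Equiv.ext fun x => hginj (congrFun h1 x)
end

section
/- Let z = (z_1,…,z_e) be a tuple of nonnegative integers and let I be a finite set of nonnegative integers with 0 ∈ I. The following statements are equivalent: (1) the identity permutation of {1,…,e} is (I,z)-admissible; (2) whenever b, b′ ∈ {1,…,e} satisfy z_b > z_{b′} and ht_I(z_b) ≥ z_{b′}, one has b < b′; (3) there is no b ∈ {1,…,e−1} with z_{b+1} > z_b and ht_I(z_{b+1}) ≥ z_b; (4) for all b ∈ {1,…,e−1}, ht_I(z_b) ≥ ht_I(z_{b+1}), and if ht_I(z_b) = ht_I(z_{b+1}) and this common value equals z_b or z_{b+1}, then z_b ≥ z_{b+1}. -/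
lemma htI_mono (I : Finset ℕ) {a b : ℕ} (h : a ≤ b) : htI I a ≤ htI I b :=
  Finset.sup_le fun i hi => by
    have := Finset.mem_filter.mp hi
    exact Finset.le_sup (f := id) (Finset.mem_filter.mpr ⟨this.1, this.2.trans h⟩)

lemma htI_mem {I : Finset ℕ} (hI : 0 ∈ I) (b : ℕ) : htI I b ∈ I := by
  obtain ⟨i, hi, heq⟩ :=
    Finset.exists_mem_eq_sup (I.filter fun i => i ≤ b)
      ⟨0, Finset.mem_filter.mpr ⟨hI, Nat.zero_le b⟩⟩ id
  rw [htI, heq]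
  exact (Finset.mem_filter.mp hi).1

lemma le_htI {I : Finset ℕ} {i b : ℕ} (h : i ∈ I) (hb : i ≤ b) : i ≤ htI I b :=
  Finset.le_sup (f := id) (Finset.mem_filter.mpr ⟨h, hb⟩)

lemma htI_le_htI {I : Finset ℕ} (hI : 0 ∈ I) {a c : ℕ} (h : htI I c ≤ a) :
    htI I c ≤ htI I a :=
  le_htI (htI_mem hI c) h

/-- from the one-step condition (3) to the shape of condition (1). -/
lemma pair31 {I : Finset ℕ} (hI : 0 ∈ I) {a c : ℕ} (h : a < c → htI I c < a) :
    htI I c ≤ htI I a ∧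
      (htI I a = htI I c →
        (c < a ∧ c = htI I c) ∨ a = c ∨ (htI I c < a ∧ htI I c < c)) := by
  constructor
  · rcases lt_or_ge a c with h1 | h1
    · exact htI_le_htI hI (le_of_lt (h h1))
    · exact htI_mono I h1
  · intro _
    rcases lt_trichotomy a c with h1 | h1 | h1
    · exact Or.inr (Or.inr ⟨h h1, lt_trans (h h1) h1⟩)
    · exact Or.inr (Or.inl h1)
    · rcases eq_or_lt_of_le (htI_le_self I c) with h2 | h2
      · exact Or.inl ⟨h1, h2.symm⟩
      · exact Or.inr (Or.inr ⟨lt_trans h2 h1, h2⟩)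

/-- from the shape of condition (1) to the one-step condition (3). -/
lemma pair13 {I : Finset ℕ} {a c : ℕ} (h1 : htI I c ≤ htI I a)
    (h2 : htI I a = htI I c →
      (c < a ∧ c = htI I c) ∨ a = c ∨ (htI I c < a ∧ htI I c < c)) :
    a < c → htI I c < a := by
  intro hac
  by_contra hcon
  push_neg at hcon
  have heq : htI I a = htI I c :=
    le_antisymm (le_trans (htI_le_self I a) hcon) h1
  rcases h2 heq with ⟨h3, _⟩ | h3 | ⟨h3, _⟩
  · omega
  · omega
  · omega

/-- from the one-step condition (3) to the shape of condition (4). -/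
lemma pair34 {I : Finset ℕ} (hI : 0 ∈ I) {a c : ℕ} (h : a < c → htI I c < a) :
    htI I c ≤ htI I a ∧
      ((htI I a = htI I c ∧ (htI I a = a ∨ htI I a = c)) → c ≤ a) := by
  constructor
  · rcases lt_or_ge a c with h1 | h1
    · exact htI_le_htI hI (le_of_lt (h h1))
    · exact htI_mono I h1
  · rintro ⟨heq, hor⟩
    by_contra hcon
    push_neg at hcon
    have := h hcon
    have hle := htI_le_self I a
    rcases hor with h1 | h1 <;> omega

/-- from the shape of condition (4) to the one-step condition (3). -/
lemma pair43 {I : Finset ℕ} {a c : ℕ}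
    (h1 : htI I c ≤ htI I a)
    (h2 : (htI I a = htI I c ∧ (htI I a = a ∨ htI I a = c)) → c ≤ a) :
    a < c → htI I c < a := by
  intro hac
  by_contra hcon
  push_neg at hcon
  have hle := htI_le_self I a
  have heq : htI I a = htI I c := le_antisymm (le_trans hle hcon) h1
  have := h2 ⟨heq, Or.inl (by omega)⟩
  omega

/-- The key induction: the adjacent condition (3) implies the global condition (2). -/
lemma key (e : ℕ) (I : Finset ℕ) (hI : 0 ∈ I) (z : Fin e → ℕ)
    (h3 : ∀ (b : ℕ) (hb : b + 1 < e),
      z ⟨b, by omega⟩ < z ⟨b + 1, hb⟩ → htI I (z ⟨b + 1, hb⟩) < z ⟨b, by omega⟩) :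
    ∀ b b' : Fin e, z b' < z b → z b' ≤ htI I (z b) → b < b' := by
  intro b b' hz hh
  by_contra hcon
  push_neg at hcon
  have aux : ∀ k (i : ℕ) (hi : i < e), (b' : ℕ) + k = i →
      z b' < z ⟨i, hi⟩ → z b' ≤ htI I (z ⟨i, hi⟩) → False := by
    intro k
    induction k with
    | zero =>
      intro i hi hik hzi _
      have hbe : (⟨i, hi⟩ : Fin e) = b' := by
        apply Fin.ext; simp; omega
      rw [hbe] at hzi
      exact lt_irrefl _ hzi
    | succ k ih =>
      intro i hi hik hzi hhi
      have hieq : i = (b' : ℕ) + k + 1 := by omega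
      subst hieq
      have hjlt : (b' : ℕ) + k < e := by omega
      rcases lt_or_ge (z ⟨(b' : ℕ) + k, hjlt⟩) (z ⟨(b' : ℕ) + k + 1, hi⟩) with hc | hc
      · have hlt := h3 ((b' : ℕ) + k) hi hc
        exact ih ((b' : ℕ) + k) hjlt rfl (lt_of_le_of_lt hhi hlt)
          (le_trans hhi (htI_le_htI hI (le_of_lt hlt)))
      · exact ih ((b' : ℕ) + k) hjlt rfl (lt_of_lt_of_le hzi hc)
          (le_trans hhi (htI_mono I hc))
  have hb' : (b' : ℕ) ≤ (b : ℕ) := hcon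
  have hbb : (⟨(b : ℕ), b.isLt⟩ : Fin e) = b := Fin.ext rfl
  exact aux ((b : ℕ) - (b' : ℕ)) (b : ℕ) b.isLt (by omega)
    (by rw [hbb]; exact hz) (by rw [hbb]; exact hh)

/-- Equivalent characterisations of when the identity permutation is `(I,z)`-admissible. -/
theorem admissible_one_iff (e : ℕ) (he : 1 ≤ e) (I : Finset ℕ) (hI : 0 ∈ I)
    (z : Fin e → ℕ) :
    (Admissible e I z 1 ↔
      ∀ b b' : Fin e, z b' < z b → z b' ≤ htI I (z b) → b < b') ∧
    ((∀ b b' : Fin e, z b' < z b → z b' ≤ htI I (z b) → b < b') ↔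
      ¬ ∃ (b : ℕ) (hb : b + 1 < e),
        z ⟨b, by omega⟩ < z ⟨b + 1, hb⟩ ∧ z ⟨b, by omega⟩ ≤ htI I (z ⟨b + 1, hb⟩)) ∧
    ((¬ ∃ (b : ℕ) (hb : b + 1 < e),
        z ⟨b, by omega⟩ < z ⟨b + 1, hb⟩ ∧ z ⟨b, by omega⟩ ≤ htI I (z ⟨b + 1, hb⟩)) ↔
      ∀ (b : ℕ) (hb : b + 1 < e),
        htI I (z ⟨b + 1, hb⟩) ≤ htI I (z ⟨b, by omega⟩) ∧
        ((htI I (z ⟨b, by omega⟩) = htI I (z ⟨b + 1, hb⟩) ∧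
            (htI I (z ⟨b, by omega⟩) = z ⟨b, by omega⟩ ∨
              htI I (z ⟨b, by omega⟩) = z ⟨b + 1, hb⟩)) →
          z ⟨b + 1, hb⟩ ≤ z ⟨b, by omega⟩)) := by
  refine ⟨?_, ?_, ?_⟩
  · constructor
    · intro hA
      apply key e I hI z
      intro b hb hlt
      have hA' := hA b hb
      simp only [Equiv.Perm.one_apply] at hA'
      exact pair13 hA'.1 (fun heq => (hA'.2 heq).imp id And.right) hlt
    · intro h2 j hj
      have h3 : z ⟨j, by omega⟩ < z ⟨j + 1, hj⟩ →
          htI I (z ⟨j + 1, hj⟩) < z ⟨j, by omega⟩ := by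
        intro hlt
        by_contra hcon
        push_neg at hcon
        have := h2 ⟨j + 1, hj⟩ ⟨j, by omega⟩ hlt hcon
        rw [Fin.lt_def] at this
        simp at this
      have hp := pair31 hI h3
      simp only [Equiv.Perm.one_apply]
      refine ⟨hp.1, fun heq => (hp.2 heq).imp id
        (fun h => ⟨Fin.mk_lt_mk.mpr (Nat.lt_succ_self j), h⟩)⟩
  · constructor
    · intro h2
      rintro ⟨b, hb, h1, h2'⟩
      have := h2 ⟨b + 1, hb⟩ ⟨b, by omega⟩ h1 h2'
      rw [Fin.lt_def] at this
      simp at this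
    · intro h3
      apply key e I hI z
      intro b hb hlt
      by_contra hcon
      push_neg at hcon
      exact h3 ⟨b, hb, hlt, hcon⟩
  · constructor
    · intro h3 b hb
      have hq3 : z ⟨b, by omega⟩ < z ⟨b + 1, hb⟩ →
          htI I (z ⟨b + 1, hb⟩) < z ⟨b, by omega⟩ := by
        intro hlt
        by_contra hcon
        push_neg at hcon
        exact h3 ⟨b, hb, hlt, hcon⟩
      exact pair34 hI hq3
    · intro h4
      rintro ⟨b, hb, h1, h2'⟩
      have := pair43 (h4 b hb).1 (h4 b hb).2 h1
      omega
end

section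
/- Let λ = (λ^{(1)},…,λ^{(ℓ)}) be an ℓ-tuple of partitions, t = (t_1,…,t_ℓ) ∈ ℤ^ℓ, and m ∈ ℤ, and suppose that for each i ∈ {1,…,ℓ} there is a set L_i ⊆ {m, m+1, …, m+e−1} with β_{t_i}(λ^{(i)}) = ℤ_{<m} ∪ L_i. Then: (1) for every i and every node (a,b) of the Young diagram of λ^{(i)} (i.e., 1 ≤ b ≤ λ^{(i)}_a), the t-content b − a + t_i is not congruent to m modulo e; in particular λ has no removable node of (e,t)-residue ≡ m (mod e); (2) for every residue j with j ≢ m (mod e), every addable or removable node of λ of (e,t)-residue j has t-content equal to m + j_m, where j_m is the unique element of {1,…,e−1} with j_m ≡ j − m (mod e); in particular, any two addable or removable nodes of λ with the same (e,t)-residue j ≢ m (mod e) have equal t-contents. -/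
/-- A partition, given as a function recording its parts `λ_1 ≥ λ_2 ≥ …` (row indices
start at 1; the value at 0 is irrelevant): weakly decreasing and eventually zero. -/
def IsPartition (lam : ℕ → ℕ) : Prop :=
  (∀ a : ℕ, 1 ≤ a → lam (a + 1) ≤ lam a) ∧ ∃ N : ℕ, ∀ a : ℕ, N ≤ a → lam a = 0

/-- The β-set of charge `t` of a partition: `β_t(λ) = {λ_a + t − a : a ≥ 1}`. -/
def betaSet (t : ℤ) (lam : ℕ → ℕ) : Set ℤ :=
  {x : ℤ | ∃ a : ℕ, 1 ≤ a ∧ x = (lam a : ℤ) + t - a}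

/-- `(a, b)` is a removable node of the partition `lam`, recorded via its column `b`. -/
def RemovableNode (lam : ℕ → ℕ) (a : ℕ) (b : ℤ) : Prop :=
  1 ≤ a ∧ b = (lam a : ℤ) ∧ lam (a + 1) < lam a

/-- `(a, b)` is an addable node of the partition `lam`, recorded via its column `b`. -/
def AddableNode (lam : ℕ → ℕ) (a : ℕ) (b : ℤ) : Prop :=
  1 ≤ a ∧ b = (lam a : ℤ) + 1 ∧ (a = 1 ∨ lam a < lam (a - 1))

lemma no_m_res (e m c : ℤ) (h1 : m + 1 ≤ c) (h2 : c ≤ m + e - 1) : ¬ c % e = m % e := by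
  intro hmod
  have h0 : (c - m) % e = 0 := by
    rw [Int.sub_emod, hmod, sub_self, Int.zero_emod]
  have h1' : (c - m) % e = c - m := Int.emod_eq_of_lt (by omega) (by omega)
  omega

lemma res_det (e m c j : ℤ) (h1 : m ≤ c) (h2 : c ≤ m + e)
    (hj : ¬ j % e = m % e) (hc : c % e = j % e) : c = m + (j - m) % e := by
  have hne1 : c ≠ m := by rintro rfl; exact hj hc.symm
  have hne2 : c ≠ m + e := by
    rintro rfl
    exact hj (hc.symm.trans (by simpa using Int.add_mul_emod_self_left (a := m) (b := e) (c := 1)))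
  have h0 : (c - m) % e = (j - m) % e := by
    rw [Int.sub_emod, hc, ← Int.sub_emod]
  have h1' : (c - m) % e = c - m := Int.emod_eq_of_lt (by omega) (by omega)
  omega

lemma aux_main (e : ℤ) (he : 2 ≤ e) (lam : ℕ → ℕ) (hp : IsPartition lam) (t m : ℤ)
    (hub : ∀ x ∈ betaSet t lam, x ≤ m + e - 1)
    (hlow : ∀ x : ℤ, x < m → x ∈ betaSet t lam) :
    (∀ a b : ℕ, 1 ≤ a → 1 ≤ b → b ≤ lam a →
      m + 1 ≤ (b:ℤ) - a + t ∧ (b:ℤ) - a + t ≤ m + e - 1) ∧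
    (∀ (a : ℕ) (b : ℤ), RemovableNode lam a b ∨ AddableNode lam a b →
      m ≤ b - a + t ∧ b - a + t ≤ m + e) := by
  obtain ⟨hdec, N, hN⟩ := hp
  have hmono : ∀ a a' : ℕ, 1 ≤ a → a ≤ a' → lam a' ≤ lam a := by
    intro a a' ha hle
    obtain ⟨k, rfl⟩ := Nat.exists_eq_add_of_le hle
    induction k with
    | zero => simp
    | succ k ih =>
      exact le_trans (hdec (a+k) (by omega)) (ih (by omega))
  have hub' : ∀ a : ℕ, 1 ≤ a → (lam a : ℤ) + t - a ≤ m + e - 1 := by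
    intro a ha
    exact hub _ ⟨a, ha, rfl⟩
  have step : ∀ a : ℕ, 1 ≤ a → (lam a : ℤ) + t - a < m → lam (a+1) = lam a := by
    intro a ha hlt
    obtain ⟨a', ha', hx⟩ := hlow ((lam a : ℤ) + t - a - 1) (by omega)
    have h1 : lam (a+1) ≤ lam a := hdec a ha
    rcases le_or_gt a' a with h | h
    · have := hmono a' a ha' h
      omega
    · have h2 := hmono (a+1) a' (by omega) (by omega)
      omega
  have L2 : ∀ a : ℕ, 1 ≤ a → (lam a : ℤ) + t - a < m → lam a = 0 := by
    intro a ha hlt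
    have key : ∀ k : ℕ, lam (a+k) = lam a ∧ (lam (a+k) : ℤ) + t - (a+k : ℕ) < m := by
      intro k
      induction k with
      | zero => exact ⟨rfl, by simpa using hlt⟩
      | succ k ih =>
        have hs := step (a+k) (by omega) ih.2
        have h1 : a + (k+1) = (a+k)+1 := rfl
        refine ⟨by rw [h1, hs, ih.1], ?_⟩
        rw [h1, hs]
        have := ih.2
        push_cast at this ⊢
        omega
    have h1 := (key N).1
    have h2 := hN (a + N) (by omega)
    omega
  have L3 : ∀ a : ℕ, 1 ≤ a → 1 ≤ lam a → m ≤ t - a := by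
    intro a ha hla
    by_contra hcon
    push_neg at hcon
    obtain ⟨a', ha', hx⟩ := hlow (t - a) (by omega)
    rcases le_or_gt a' a with h | h
    · have haa : a' = a := by omega
      subst haa
      omega
    · have : lam a' = 0 := L2 a' (by omega) (by omega)
      omega
  have Cnode : ∀ a b : ℕ, 1 ≤ a → 1 ≤ b → b ≤ lam a →
      m + 1 ≤ (b:ℤ) - a + t ∧ (b:ℤ) - a + t ≤ m + e - 1 := by
    intro a b ha hb hble
    have h3 := L3 a ha (by omega)
    have h1 := hub' a ha
    omega
  refine ⟨Cnode, ?_⟩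
  intro a b hab
  rcases hab with ⟨ha, hb, hr⟩ | ⟨ha, hb, hr⟩
  · have h := Cnode a (lam a) ha (by omega) le_rfl
    omega
  · have h1 := hub' a ha
    rcases Nat.eq_zero_or_pos (lam a) with h0 | hpos
    · by_cases hone : a = 1
      · subst hone
        obtain ⟨a', ha', hx⟩ := hlow (m-1) (by omega)
        have := hmono 1 a' le_rfl ha'
        omega
      · have hr' : lam a < lam (a-1) := by tauto
        have h2 := L3 (a-1) (by omega) (by omega)
        have hc : ((a-1:ℕ):ℤ) = (a:ℤ) - 1 := by omega
        omega
    · have h3 := L3 a ha hpos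
      omega

/-- If each `β_{t_i}(λ^{(i)}) = ℤ_{<m} ∪ L_i` with `L_i ⊆ [m, m+e−1]`, then no node of
`λ` has `t`-content `≡ m (mod e)`, and every addable or removable node of residue
`j ≢ m (mod e)` has `t`-content `m + ((j − m) mod e)`; in particular any two
addable/removable nodes of equal residue `j ≢ m` have equal `t`-contents. -/
theorem node_contents_of_interval (e : ℤ) (he : 2 ≤ e) (ℓ : ℕ) (hl : 1 ≤ ℓ)
    (lam : Fin ℓ → ℕ → ℕ) (hpart : ∀ i, IsPartition (lam i))
    (t : Fin ℓ → ℤ) (m : ℤ)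
    (hL : ∀ i, ∃ L : Set ℤ, L ⊆ Set.Icc m (m + e - 1) ∧
      betaSet (t i) (lam i) = {x : ℤ | x < m} ∪ L) :
    (∀ (i : Fin ℓ) (a b : ℕ), 1 ≤ a → 1 ≤ b → b ≤ lam i a →
      ¬ ((b : ℤ) - a + t i) % e = m % e) ∧
    (∀ (i : Fin ℓ) (a : ℕ) (b : ℤ), RemovableNode (lam i) a b →
      ¬ (b - a + t i) % e = m % e) ∧
    (∀ j : ℤ, ¬ j % e = m % e →
      ∀ (i : Fin ℓ) (a : ℕ) (b : ℤ),
        RemovableNode (lam i) a b ∨ AddableNode (lam i) a b →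
        (b - a + t i) % e = j % e →
        b - a + t i = m + (j - m) % e) ∧
    (∀ j : ℤ, ¬ j % e = m % e →
      ∀ (i i' : Fin ℓ) (a a' : ℕ) (b b' : ℤ),
        RemovableNode (lam i) a b ∨ AddableNode (lam i) a b →
        RemovableNode (lam i') a' b' ∨ AddableNode (lam i') a' b' →
        (b - a + t i) % e = j % e → (b' - a' + t i') % e = j % e →
        b - a + t i = b' - a' + t i') := by
  have haux : ∀ i : Fin ℓ,
      (∀ a b : ℕ, 1 ≤ a → 1 ≤ b → b ≤ lam i a →
        m + 1 ≤ (b:ℤ) - a + t i ∧ (b:ℤ) - a + t i ≤ m + e - 1) ∧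
      (∀ (a : ℕ) (b : ℤ), RemovableNode (lam i) a b ∨ AddableNode (lam i) a b →
        m ≤ b - a + t i ∧ b - a + t i ≤ m + e) := by
    intro i
    obtain ⟨L, hLsub, hLeq⟩ := hL i
    refine aux_main e he (lam i) (hpart i) (t i) m ?_ ?_
    · intro x hx
      rw [hLeq] at hx
      rcases hx with hx | hx
      · have : x < m := hx
        omega
      · have := hLsub hx
        rw [Set.mem_Icc] at this
        omega
    · intro x hx
      rw [hLeq]
      exact Or.inl hx
  have part3 : ∀ j : ℤ, ¬ j % e = m % e →
      ∀ (i : Fin ℓ) (a : ℕ) (b : ℤ),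
        RemovableNode (lam i) a b ∨ AddableNode (lam i) a b →
        (b - a + t i) % e = j % e →
        b - a + t i = m + (j - m) % e := by
    intro j hj i a b hab hmod
    obtain ⟨hc1, hc2⟩ := (haux i).2 a b hab
    exact res_det e m _ j hc1 hc2 hj hmod
  refine ⟨?_, ?_, part3, ?_⟩
  · intro i a b ha hb hble
    obtain ⟨hc1, hc2⟩ := (haux i).1 a b ha hb hble
    exact no_m_res e m _ hc1 hc2
  · intro i a b hrem
    obtain ⟨ha, hb, hlt⟩ := hrem
    obtain ⟨hc1, hc2⟩ := (haux i).1 a (lam i a) ha (by omega) le_rfl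
    rw [hb]
    exact no_m_res e m _ hc1 hc2
  · intro j hj i i' a a' b b' h1 h2 hm1 hm2
    rw [part3 j hj i a b h1 hm1, part3 j hj i' a' b' h2 hm2]
end

section
/- Let λ = (λ^{(1)},…,λ^{(ℓ)}) be an ℓ-tuple of partitions and t = (t_1,…,t_ℓ) ∈ ℤ^ℓ with t_1 ≤ t_2 ≤ … ≤ t_ℓ ≤ t_1 + e. Let m ∈ ℤ and suppose that for each i there is a set L_i ⊆ {m, m+1, …, m+e−1} with β_{t_i}(λ^{(i)}) = ℤ_{<m} ∪ L_i. Define a tableau T of shape (|L_ℓ|, |L_{ℓ−1}|, …, |L_1|) by T(i,j) := 1 − m + (the j-th smallest element of L_{ℓ−i+1}), for 1 ≤ i ≤ ℓ and 1 ≤ j ≤ |L_{ℓ−i+1}|. Then: (a) the inequality λ^{(ℓ)}_a ≥ λ^{(1)}_{a + e + t_1 − t_ℓ} holds for all a ≥ 1; and (b) the condition [λ^{(i)}_a ≥ λ^{(i+1)}_{a + t_{i+1} − t_i} for all 1 ≤ i ≤ ℓ−1 and all a ≥ 1] holds if and only if T is column semistandard, i.e., T(i,j) ≤ T(i+1,j)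 whenever both entries are defined (entries are automatically strictly increasing along each row). -/
lemma lam_anti {lam : ℕ → ℕ} (hp : IsPartition lam) :
    ∀ a b : ℕ, 1 ≤ a → a ≤ b → lam b ≤ lam a := by
  intro a b ha hab
  induction b, hab using Nat.le_induction with
  | base => exact le_refl _
  | succ n hn ih => exact le_trans (hp.1 n (le_trans ha hn)) ih

lemma beta_struct (e : ℤ) (he : 0 < e) (lam : ℕ → ℕ) (hp : IsPartition lam)
    (t m : ℤ) (L : Finset ℤ) (hsub : (L : Set ℤ) ⊆ Set.Icc m (m + e - 1))
    (hbeta : betaSet t lam = {x : ℤ | x < m} ∪ (L : Set ℤ)) :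
    ((L.card : ℤ) = t - m) ∧ ((L.card : ℤ) ≤ e) ∧
    (∀ a : ℕ, (L.card : ℤ) < (a : ℤ) → lam a = 0) ∧
    (∀ j : ℕ, 1 ≤ j → j ≤ L.card →
      ((L.sort (· ≤ ·)).getD (j - 1) 0 : ℤ)
        = (lam (L.card + 1 - j) : ℤ) + t - ((L.card + 1 - j : ℕ) : ℤ)) := by
  set f : ℕ → ℤ := fun a => (lam a : ℤ) + t - a with hf
  -- quantitative antitonicity
  have hdec : ∀ a b : ℕ, 1 ≤ a → a ≤ b → f b ≤ f a - ((b : ℤ) - a) := by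
    intro a b ha hab
    have := lam_anti hp a b ha hab
    simp only [hf]
    have : (lam b : ℤ) ≤ lam a := by exact_mod_cast this
    omega
  have hmemS : ∀ a : ℕ, 1 ≤ a → f a ∈ ({x : ℤ | x < m} ∪ (L : Set ℤ)) := by
    intro a ha
    rw [← hbeta]; exact ⟨a, ha, rfl⟩
  have hsurj : ∀ y : ℤ, y ∈ ({x : ℤ | x < m} ∪ (L : Set ℤ)) → ∃ a : ℕ, 1 ≤ a ∧ y = f a := by
    intro y hy; rw [← hbeta] at hy; exact hy
  obtain ⟨N, hN⟩ := hp.2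
  -- f a < m → lam a = 0, by downward induction
  have key : ∀ k a : ℕ, 1 ≤ a → N ≤ a + k → f a < m → lam a = 0 := by
    intro k
    induction k with
    | zero => intro a ha hNa _; exact hN a (by omega)
    | succ k ih =>
      intro a ha hNa hfm
      by_cases hNa' : N ≤ a
      · exact hN a hNa'
      · have hfa1 : f (a + 1) < m := by
          have := hdec a (a + 1) ha (by omega)
          push_cast at this ⊢; omega
        have hl1 : lam (a + 1) = 0 := ih (a + 1) (by omega) (by omega) hfa1
        have hy : (t - (a : ℤ)) ∈ ({x : ℤ | x < m} ∪ (L : Set ℤ)) := by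
          left
          simp only [Set.mem_setOf_eq]
          have : (0 : ℤ) ≤ lam a := by positivity
          simp only [hf] at hfm; omega
        obtain ⟨a', ha', hya'⟩ := hsurj _ hy
        have ha'le : a' ≤ a := by
          by_contra hcon
          have : f a' ≤ f (a + 1) - ((a' : ℤ) - (a + 1)) := hdec (a + 1) a' (by omega) (by omega)
          simp only [hf, hl1] at this hya'
          push_cast at this hya'
          omega
        have hfa' : (lam a' : ℤ) + t - a' = t - a := by rw [hya']
        have : (lam a' : ℤ) = (a' : ℤ) - a := by omega
        have h0 : (0:ℤ) ≤ (lam a' : ℤ) := by positivity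
        have haa : a' = a := by omega
        subst haa
        omega
  have keym : ∀ a : ℕ, 1 ≤ a → f a < m → lam a = 0 := fun a ha hfm =>
    key N a ha (by omega) hfm
  -- the element m - 1
  obtain ⟨a₀, ha₀, hya₀⟩ := hsurj (m - 1) (by left; simp)
  have hla₀ : lam a₀ = 0 := keym a₀ ha₀ (by omega)
  have ha₀eq : (a₀ : ℤ) = t - m + 1 := by
    simp only [hf, hla₀] at hya₀; push_cast at hya₀; omega
  have htm : 0 ≤ t - m := by omega
  set c : ℕ := (t - m).toNat with hc
  have hcz : (c : ℤ) = t - m := Int.toNat_of_nonneg htm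
  have ha₀c : a₀ = c + 1 := by omega
  have hfc1 : f (c + 1) = m - 1 := by rw [← ha₀c, ← hya₀]
  -- lam a = 0 for a > c
  have hlam0 : ∀ a : ℕ, c < a → lam a = 0 := by
    intro a hca
    refine keym a (by omega) ?_
    have := hdec (c + 1) a (by omega) (by omega)
    push_cast at this; omega
  -- f a ∈ L for 1 ≤ a ≤ c
  have hfL : ∀ a : ℕ, 1 ≤ a → a ≤ c → f a ∈ L := by
    intro a ha hac
    have hge : m ≤ f a := by
      have h1 := hdec a (c + 1) ha (by omega)
      rw [hfc1] at h1; push_cast at h1; omega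
    rcases hmemS a ha with h | h
    · simp only [Set.mem_setOf_eq] at h; omega
    · exact h
  -- L = image
  have hL : L = (Finset.Icc 1 c).image f := by
    ext x
    simp only [Finset.mem_image, Finset.mem_Icc]
    constructor
    · intro hx
      have hxm : m ≤ x := (hsub hx).1
      obtain ⟨a, ha, hax⟩ := hsurj x (by right; exact hx)
      refine ⟨a, ⟨ha, ?_⟩, hax.symm⟩
      by_contra hcon
      have := hlam0 a (by omega)
      simp only [hf, this] at hax
      push_cast at hax; omega
    · rintro ⟨a, ⟨ha, hac⟩, rfl⟩
      exact hfL a ha hac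
  have hinj : Set.InjOn f ((Finset.Icc 1 c : Finset ℕ) : Set ℕ) := by
    intro a ha b hb hab
    simp only [Finset.coe_Icc, Set.mem_Icc] at ha hb
    by_contra hne
    rcases Nat.lt_or_ge a b with h | h
    · have := hdec a b ha.1 (le_of_lt h); push_cast at this; omega
    · have hba : b < a := by omega
      have := hdec b a hb.1 (le_of_lt hba); push_cast at this; omega
  have hcard : L.card = c := by
    rw [hL, Finset.card_image_of_injOn hinj, Nat.card_Icc]; omega
  have hcarde : (L.card : ℤ) ≤ e := by
    have hsub' : L ⊆ Finset.Icc m (m + e - 1) := by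
      intro x hx
      have := hsub hx
      simpa only [Finset.mem_Icc, Set.mem_Icc] using this
    have := Finset.card_le_card hsub'
    rw [Int.card_Icc] at this
    have h2 : ((m + e - 1 + 1 - m).toNat : ℤ) = e := by omega
    omega
  refine ⟨by omega, hcarde, fun a ha => hlam0 a (by omega), ?_⟩
  -- sorted list
  have hg : ∀ k : Fin c, f (c - (k : ℕ)) ∈ L := fun k => hfL _ (by omega) (by omega)
  have hsort : L.sort (· ≤ ·) = List.ofFn (fun k : Fin c => f (c - (k : ℕ))) := by
    refine (fun hp h1 h2 => List.Perm.eq_of_pairwise' (r := (· ≤ ·)) h1 h2 hp) ?_ ?_ ?_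
    · apply List.perm_of_nodup_nodup_toFinset_eq (Finset.sort_nodup _ _)
      · rw [List.nodup_ofFn]
        intro a b hab
        simp only [] at hab
        by_contra hne
        have ha1 : 1 ≤ c - (a : ℕ) := by omega
        have hb1 : 1 ≤ c - (b : ℕ) := by omega
        have hne' : c - (a : ℕ) ≠ c - (b : ℕ) := by
          have := a.2; have := b.2
          intro h; apply hne; ext; omega
        rcases Nat.lt_or_ge (c - (a : ℕ)) (c - (b : ℕ)) with h | h
        · have := hdec _ _ ha1 (le_of_lt h); rw [hab] at this; push_cast at this; omega
        · have h' : c - (b : ℕ) < c - (a : ℕ) := by omega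
          have := hdec _ _ hb1 (le_of_lt h'); rw [← hab] at this; push_cast at this; omega
      · rw [Finset.sort_toFinset]
        ext x
        simp only [List.mem_toFinset, List.mem_ofFn, Set.mem_range]
        rw [hL]
        simp only [Finset.mem_image, Finset.mem_Icc]
        constructor
        · rintro ⟨a, ⟨ha1, hac⟩, rfl⟩
          exact ⟨⟨c - a, by omega⟩, by simp; congr 1; omega⟩
        · rintro ⟨k, rfl⟩
          exact ⟨c - (k : ℕ), ⟨by omega, by omega⟩, rfl⟩
    · exact Finset.pairwise_sort _ _
    · rw [← List.sortedLE_iff_pairwise, List.sortedLE_ofFn_iff]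
      intro a b hab
      rcases eq_or_lt_of_le hab with h | h
      · rw [h]
      · have h1 : 1 ≤ c - (b : ℕ) := by omega
        have h2 : c - (b : ℕ) ≤ c - (a : ℕ) := by omega
        have := hdec _ _ h1 h2
        have hba : (b : ℕ) < c := b.2
        have : f (c - (a:ℕ)) ≤ f (c - (b:ℕ)) := by
          rcases eq_or_lt_of_le h2 with h'' | h''
          · rw [h'']
          · have := hdec _ _ h1 (le_of_lt h'')
            push_cast at this; omega
        exact this
  intro j hj1 hjc
  rw [hcard] at hjc
  rw [hsort, hcard]
  have hlen : j - 1 < (List.ofFn (fun k : Fin c => f (c - (k : ℕ)))).length := by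
    rw [List.length_ofFn]; omega
  rw [List.getD_eq_getElem _ _ hlen, List.getElem_ofFn]
  have : c - (j - 1) = c + 1 - j := by omega
  simp only [hf, this]

lemma fA (ℓ : ℕ) (hl : 1 ≤ ℓ) : ℓ - 1 < ℓ := by omega
lemma fB (ℓ : ℕ) (hl : 1 ≤ ℓ) : 0 < ℓ := by omega
lemma fC (ℓ i : ℕ) (hl : 1 ≤ ℓ) (hi1 : 1 ≤ i) : ℓ - i < ℓ := by omega
lemma fD (c ℓ : ℕ) (hc : c + 1 < ℓ) : c < ℓ := by omega
lemma fE (ℓ i : ℕ) (hi1 : 1 ≤ i) (hi2 : i + 1 ≤ ℓ) : ℓ - i < ℓ := by omega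
lemma fF (ℓ i : ℕ) (hi1 : 1 ≤ i) (hi2 : i + 1 ≤ ℓ) : ℓ - i - 1 < ℓ := by omega

section Parts

variable (e : ℤ) (ℓ : ℕ)

lemma Tcompare (m tu tv Tu Tv : ℤ) (Su Sv : Finset ℤ) (lu lv : ℕ → ℕ) (j : ℕ)
    (hcu : (Su.card : ℤ) = tu - m) (hcv : (Sv.card : ℤ) = tv - m)
    (hj1 : 1 ≤ j) (hju : j ≤ Su.card) (hjv : j ≤ Sv.card)
    (hsu : ((Su.sort (· ≤ ·)).getD (j - 1) 0 : ℤ)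
      = (lu (Su.card + 1 - j) : ℤ) + tu - ((Su.card + 1 - j : ℕ) : ℤ))
    (hsv : ((Sv.sort (· ≤ ·)).getD (j - 1) 0 : ℤ)
      = (lv (Sv.card + 1 - j) : ℤ) + tv - ((Sv.card + 1 - j : ℕ) : ℤ))
    (hTu : Tu = 1 - m + (Su.sort (· ≤ ·)).getD (j - 1) 0)
    (hTv : Tv = 1 - m + (Sv.sort (· ≤ ·)).getD (j - 1) 0) :
    (Tu ≤ Tv ↔ lu (Su.card + 1 - j) ≤ lv (Sv.card + 1 - j)) := by
  rw [hTu, hTv, hsu, hsv]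
  constructor <;> intro h <;> omega

lemma partA (he : 2 ≤ e) (hl : 1 ≤ ℓ) (lam : Fin ℓ → ℕ → ℕ) (hpart : ∀ i, IsPartition (lam i))
    (t : Fin ℓ → ℤ)
    (hte : t ⟨ℓ - 1, fA ℓ hl⟩ ≤ t ⟨0, fB ℓ hl⟩ + e)
    (m : ℤ) (L : Fin ℓ → Finset ℤ)
    (hLsub : ∀ i, (L i : Set ℤ) ⊆ Set.Icc m (m + e - 1))
    (hLbeta : ∀ i, betaSet (t i) (lam i) = {x : ℤ | x < m} ∪ (L i : Set ℤ)) :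
    ∀ a : ℕ, 1 ≤ a →
      lam ⟨0, fB ℓ hl⟩ (((a : ℤ) + e + t ⟨0, fB ℓ hl⟩ - t ⟨ℓ - 1, fA ℓ hl⟩).toNat) ≤
        lam ⟨ℓ - 1, fA ℓ hl⟩ a := by
  have H := fun i => beta_struct e (by omega) (lam i) (hpart i) (t i) m (L i)
    (hLsub i) (hLbeta i)
  intro a ha
  obtain ⟨hc0, -, hz0, -⟩ := H ⟨0, by omega⟩
  obtain ⟨hcl, hcle, -, -⟩ := H ⟨ℓ - 1, by omega⟩
  simp only [hz0 (((a : ℤ) + e + t ⟨0, by omega⟩ - t ⟨ℓ - 1, by omega⟩).toNat) (by omega)]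
  exact Nat.zero_le _

lemma partF (he : 2 ≤ e) (hl : 1 ≤ ℓ) (lam : Fin ℓ → ℕ → ℕ) (hpart : ∀ i, IsPartition (lam i))
    (t : Fin ℓ → ℤ) (hmono : Monotone t)
    (m : ℤ) (L : Fin ℓ → Finset ℤ)
    (hLsub : ∀ i, (L i : Set ℤ) ⊆ Set.Icc m (m + e - 1))
    (hLbeta : ∀ i, betaSet (t i) (lam i) = {x : ℤ | x < m} ∪ (L i : Set ℤ))
    (T : ℕ → ℕ → ℤ)
    (hT : ∀ (i j : ℕ) (hi1 : 1 ≤ i) (hi2 : i ≤ ℓ), 1 ≤ j →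
      j ≤ (L ⟨ℓ - i, fC ℓ i hl hi1⟩).card →
      T i j = 1 - m + ((L ⟨ℓ - i, fC ℓ i hl hi1⟩).sort (· ≤ ·)).getD (j - 1) 0)
    (hflotw : ∀ (c : ℕ) (hc : c + 1 < ℓ) (a : ℕ), 1 ≤ a →
        lam ⟨c + 1, hc⟩ (((a : ℤ) + t ⟨c + 1, hc⟩ - t ⟨c, fD c ℓ hc⟩).toNat) ≤
          lam ⟨c, fD c ℓ hc⟩ a) :
    ∀ (i j : ℕ) (hi1 : 1 ≤ i) (hi2 : i + 1 ≤ ℓ), 1 ≤ j →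
        j ≤ (L ⟨ℓ - i, fE ℓ i hi1 hi2⟩).card → j ≤ (L ⟨ℓ - i - 1, fF ℓ i hi1 hi2⟩).card →
        T i j ≤ T (i + 1) j := by
  have H := fun i => beta_struct e (by omega) (lam i) (hpart i) (t i) m (L i)
    (hLsub i) (hLbeta i)
  intro i j hi1 hi2 hj1 hjA hjB
  obtain ⟨hcA, -, -, hsA⟩ := H ⟨ℓ - i, by omega⟩
  obtain ⟨hcB, -, -, hsB⟩ := H ⟨ℓ - i - 1, by omega⟩
  -- index conversions
  have e4 : (⟨ℓ - (i + 1), by omega⟩ : Fin ℓ) = ⟨ℓ - i - 1, by omega⟩ :=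
    Fin.ext (by simp only []; omega)
  have hTu : T i j = 1 - m + ((L ⟨ℓ - i, by omega⟩).sort (· ≤ ·)).getD (j - 1) 0 :=
    hT i j hi1 (by omega) hj1 hjA
  have hTv : T (i + 1) j
      = 1 - m + ((L ⟨ℓ - i - 1, by omega⟩).sort (· ≤ ·)).getD (j - 1) 0 := by
    have h := hT (i + 1) j (by omega) hi2 hj1 (by simp only [e4]; exact hjB)
    simp only [e4] at h
    exact h
  refine (Tcompare m (t ⟨ℓ - i, by omega⟩) (t ⟨ℓ - i - 1, by omega⟩) (T i j) (T (i + 1) j)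
    (L ⟨ℓ - i, by omega⟩) (L ⟨ℓ - i - 1, by omega⟩)
    (lam ⟨ℓ - i, by omega⟩) (lam ⟨ℓ - i - 1, by omega⟩) j hcA hcB hj1 hjA hjB
    (hsA j hj1 hjA) (hsB j hj1 hjB) hTu hTv).mpr ?_
  have hu : (⟨ℓ - i - 1 + 1, by omega⟩ : Fin ℓ) = ⟨ℓ - i, by omega⟩ :=
    Fin.ext (by simp only []; omega)
  have hflotw' := hflotw (ℓ - i - 1) (by omega) ((L ⟨ℓ - i - 1, by omega⟩).card + 1 - j)
    (by omega)
  simp only [hu] at hflotw'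
  have harg : ((((L ⟨ℓ - i - 1, by omega⟩).card + 1 - j : ℕ) : ℤ)
      + t ⟨ℓ - i, by omega⟩ - t ⟨ℓ - i - 1, by omega⟩).toNat
      = (L ⟨ℓ - i, by omega⟩).card + 1 - j := by omega
  simp only [harg] at hflotw'
  exact hflotw'

lemma partG (he : 2 ≤ e) (hl : 1 ≤ ℓ) (lam : Fin ℓ → ℕ → ℕ) (hpart : ∀ i, IsPartition (lam i))
    (t : Fin ℓ → ℤ) (hmono : Monotone t)
    (m : ℤ) (L : Fin ℓ → Finset ℤ)
    (hLsub : ∀ i, (L i : Set ℤ) ⊆ Set.Icc m (m + e - 1))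
    (hLbeta : ∀ i, betaSet (t i) (lam i) = {x : ℤ | x < m} ∪ (L i : Set ℤ))
    (T : ℕ → ℕ → ℤ)
    (hT : ∀ (i j : ℕ) (hi1 : 1 ≤ i) (hi2 : i ≤ ℓ), 1 ≤ j →
      j ≤ (L ⟨ℓ - i, fC ℓ i hl hi1⟩).card →
      T i j = 1 - m + ((L ⟨ℓ - i, fC ℓ i hl hi1⟩).sort (· ≤ ·)).getD (j - 1) 0)
    (hcol : ∀ (i j : ℕ) (hi1 : 1 ≤ i) (hi2 : i + 1 ≤ ℓ), 1 ≤ j →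
        j ≤ (L ⟨ℓ - i, fE ℓ i hi1 hi2⟩).card → j ≤ (L ⟨ℓ - i - 1, fF ℓ i hi1 hi2⟩).card →
        T i j ≤ T (i + 1) j) :
    ∀ (c : ℕ) (hc : c + 1 < ℓ) (a : ℕ), 1 ≤ a →
        lam ⟨c + 1, hc⟩ (((a : ℤ) + t ⟨c + 1, hc⟩ - t ⟨c, fD c ℓ hc⟩).toNat) ≤
          lam ⟨c, fD c ℓ hc⟩ a := by
  have H := fun i => beta_struct e (by omega) (lam i) (hpart i) (t i) m (L i)
    (hLsub i) (hLbeta i)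
  intro c hc a ha
  obtain ⟨hcp, -, hzp, hsp⟩ := H ⟨c, by omega⟩
  obtain ⟨hcq, -, hzq, hsq⟩ := H ⟨c + 1, hc⟩
  have htpq : t ⟨c, by omega⟩ ≤ t ⟨c + 1, hc⟩ := hmono (by simp [Fin.mk_le_mk])
  by_cases hac : (a : ℤ) ≤ ((L ⟨c, by omega⟩).card : ℤ)
  · obtain ⟨i, hidef⟩ : ∃ i : ℕ, i = ℓ - 1 - c := ⟨_, rfl⟩
    have hi1 : 1 ≤ i := by omega
    have hi2 : i + 1 ≤ ℓ := by omega
    have e2 : (⟨ℓ - i, by omega⟩ : Fin ℓ) = ⟨c + 1, hc⟩ :=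
      Fin.ext (by simp only []; omega)
    have e3 : (⟨ℓ - i - 1, by omega⟩ : Fin ℓ) = ⟨c, by omega⟩ :=
      Fin.ext (by simp only []; omega)
    have e4 : (⟨ℓ - (i + 1), by omega⟩ : Fin ℓ) = ⟨c, by omega⟩ :=
      Fin.ext (by simp only []; omega)
    obtain ⟨j, hjdef⟩ : ∃ j : ℕ, j = (L ⟨c, by omega⟩).card + 1 - a := ⟨_, rfl⟩
    have hj1 : 1 ≤ j := by omega
    have hjp : j ≤ (L ⟨c, by omega⟩).card := by omega
    have hjq : j ≤ (L ⟨c + 1, hc⟩).card := by omega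
    have hcol' := hcol i j hi1 hi2 hj1 (by simp only [e2]; exact hjq)
      (by simp only [e3]; exact hjp)
    have hTu : T i j = 1 - m + ((L ⟨c + 1, hc⟩).sort (· ≤ ·)).getD (j - 1) 0 := by
      have h := hT i j hi1 (by omega) hj1 (by simp only [e2]; exact hjq)
      simp only [e2] at h
      exact h
    have hTv : T (i + 1) j = 1 - m + ((L ⟨c, by omega⟩).sort (· ≤ ·)).getD (j - 1) 0 := by
      have h := hT (i + 1) j (by omega) (by omega) hj1 (by simp only [e4]; exact hjp)
      simp only [e4] at h
      exact h
    have hle := (Tcompare m (t ⟨c + 1, hc⟩) (t ⟨c, by omega⟩) (T i j) (T (i + 1) j)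
      (L ⟨c + 1, hc⟩) (L ⟨c, by omega⟩) (lam ⟨c + 1, hc⟩) (lam ⟨c, by omega⟩) j
      hcq hcp hj1 hjq hjp (hsq j hj1 hjq) (hsp j hj1 hjp) hTu hTv).mp hcol'
    have harga : (L ⟨c, by omega⟩).card + 1 - j = a := by omega
    have hargb : (L ⟨c + 1, hc⟩).card + 1 - j
        = ((a : ℤ) + t ⟨c + 1, hc⟩ - t ⟨c, by omega⟩).toNat := by omega
    simp only [harga, hargb] at hle
    exact hle
  · simp only [hzq (((a : ℤ) + t ⟨c + 1, hc⟩ - t ⟨c, by omega⟩).toNat) (by omega)]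
    exact Nat.zero_le _

end Parts

/-- Suppose `t_1 ≤ … ≤ t_ℓ ≤ t_1 + e` and each `β_{t_i}(λ^{(i)}) = ℤ_{<m} ∪ L_i` with
`L_i ⊆ [m, m+e−1]`, and let `T` be the generalised tableau of shape
`(|L_ℓ|,…,|L_1|)` with `T(i,j) = 1 − m + (j`-th smallest element of `L_{ℓ−i+1})`.
Then (a) `λ^{(ℓ)}_a ≥ λ^{(1)}_{a+e+t_1−t_ℓ}` for all `a ≥ 1`, and (b) the
FLOTW condition `λ^{(i)}_a ≥ λ^{(i+1)}_{a+t_{i+1}−t_i}` (all `i`, `a`) holds iff `T`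
is column semistandard. -/
theorem flotw_iff_columnSemistandard (e : ℤ) (he : 2 ≤ e) (ℓ : ℕ) (hl : 1 ≤ ℓ)
    (lam : Fin ℓ → ℕ → ℕ) (hpart : ∀ i, IsPartition (lam i))
    (t : Fin ℓ → ℤ) (hmono : Monotone t)
    (hte : t ⟨ℓ - 1, by omega⟩ ≤ t ⟨0, by omega⟩ + e)
    (m : ℤ) (L : Fin ℓ → Finset ℤ)
    (hLsub : ∀ i, (L i : Set ℤ) ⊆ Set.Icc m (m + e - 1))
    (hLbeta : ∀ i, betaSet (t i) (lam i) = {x : ℤ | x < m} ∪ (L i : Set ℤ))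
    (T : ℕ → ℕ → ℤ)
    (hT : ∀ (i j : ℕ) (hi1 : 1 ≤ i) (hi2 : i ≤ ℓ), 1 ≤ j →
      j ≤ (L ⟨ℓ - i, by omega⟩).card →
      T i j = 1 - m + ((L ⟨ℓ - i, by omega⟩).sort (· ≤ ·)).getD (j - 1) 0) :
    (∀ a : ℕ, 1 ≤ a →
      lam ⟨0, by omega⟩ (((a : ℤ) + e + t ⟨0, by omega⟩ - t ⟨ℓ - 1, by omega⟩).toNat) ≤
        lam ⟨ℓ - 1, by omega⟩ a) ∧
    ((∀ (c : ℕ) (hc : c + 1 < ℓ) (a : ℕ), 1 ≤ a →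
        lam ⟨c + 1, hc⟩ (((a : ℤ) + t ⟨c + 1, hc⟩ - t ⟨c, by omega⟩).toNat) ≤
          lam ⟨c, by omega⟩ a) ↔
      (∀ (i j : ℕ) (hi1 : 1 ≤ i) (hi2 : i + 1 ≤ ℓ), 1 ≤ j →
        j ≤ (L ⟨ℓ - i, by omega⟩).card → j ≤ (L ⟨ℓ - i - 1, by omega⟩).card →
        T i j ≤ T (i + 1) j)) := by
  refine ⟨partA e ℓ he hl lam hpart t hte m L hLsub hLbeta, ?_, ?_⟩
  · intro hflotw
    exact partF e ℓ he hl lam hpart t hmono m L hLsub hLbeta T hT hflotw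
  · intro hcol
    exact partG e ℓ he hl lam hpart t hmono m L hLsub hLbeta T hT hcol
end
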